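/- arXiv:2210.14340 — 5 statements merged into one kernel-verified Lean document; each statement's English description precedes it below -/
import Mathlib

section
/- Let (Θⁿ)_{n∈ℕ} be a family of subsets of L_p(μ;X) with Θⁿ ⊆ Θ^{n+1} for all n ∈ ℕ. If ⋃_{n∈ℕ} Θⁿ is dense in L_p(μ;X) and contains 0, then for every h > 0 and f ∈ Lip_p, the sequence I_{Θⁿ}(h)f is nondecreasing in n and converges to I_{L_p(μ;X)}(h)f as n → ∞. -/
open MeasureTheory Filter Set
open scoped Topology ENNReal NNReal RealInnerProductSpace

noncomputable section

variable {X : Type*} [NormedAddCommGroup X] [InnerProductSpace ℝ X]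
  [SecondCountableTopology X] [CompleteSpace X] [MeasurableSpace X] [BorelSpace X]

/-- `π` is a coupling of `μ` and `ν`. -/
def IsCoupling (μ ν : Measure X) (π : Measure (X × X)) : Prop :=
  π.map Prod.fst = μ ∧ π.map Prod.snd = ν

/-- The `p`-Wasserstein distance between `μ` and `ν` (valued in `ℝ≥0∞`). -/
def Wp (p : ℝ) (μ ν : Measure X) : ℝ≥0∞ :=
  (⨅ π ∈ {π : Measure (X × X) | IsCoupling μ ν π},
    ∫⁻ q, (‖q.1 - q.2‖₊ : ℝ≥0∞) ^ p ∂π) ^ (1 / p)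

/-- Borel probability measures with finite `p`-th moment. -/
def Pp (p : ℝ) : Set (Measure X) :=
  {ν | IsProbabilityMeasure ν ∧ ∫⁻ x, (‖x‖₊ : ℝ≥0∞) ^ p ∂ν < ⊤}

/-- The rescaled penalty function `φ_h(v) = h·φ(v/h)`. -/
def phih (φ : ℝ → ℝ≥0∞) (h v : ℝ) : ℝ≥0∞ := ENNReal.ofReal h * φ (v / h)

/-- The risk functional `I(h) f`. -/
def Ifun (μ : Measure X) (φ : ℝ → ℝ≥0∞) (p h : ℝ) (f : X → ℝ) : EReal :=
  ⨆ ν ∈ Pp (X := X) p,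
    ((∫ x, f x ∂ν : ℝ) : EReal) - ((phih φ h (Wp p μ ν).toReal : ℝ≥0∞) : EReal)

/-- The `L_p(μ; X)` norm of a vector field. -/
def lpnorm (μ : Measure X) (p : ℝ) (θ : X → X) : ℝ := (∫ y, ‖θ y‖ ^ p ∂μ) ^ (1 / p)

/-- The parametric risk functional `I_Θ(h) f`, where `μ_θ` is the pushforward of `μ`
under `y ↦ y + θ(y)`. -/
def ITheta (μ : Measure X) (φ : ℝ → ℝ≥0∞) (p : ℝ) (Θ : Set (X → X)) (h : ℝ)
    (f : X → ℝ) : EReal :=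
  ⨆ θ ∈ Θ, ((∫ x, f x ∂(μ.map fun y => y + θ y) : ℝ) : EReal)
    - ((phih φ h (lpnorm μ p θ) : ℝ≥0∞) : EReal)

/-- Membership in `Lip_p`. -/
def MemLipP (p : ℝ) (f : X → ℝ) : Prop :=
  ∃ L : ℝ, 0 ≤ L ∧ ∀ x₁ x₂ : X,
    |f x₁ - f x₂| ≤ L * (1 + max ‖x₁‖ ‖x₂‖) ^ (p - 1) * ‖x₁ - x₂‖

/-- The local Lipschitz constant `|f|_Lip`. -/
def locLip (f : X → ℝ) (x : X) : ℝ :=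
  limsup (fun h : ℝ =>
      sSup ((fun u : X => (f (x + h • u) - f x) / h) '' {u : X | ‖u‖ = 0 ∨ ‖u‖ = 1}))
    (𝓝[>] (0 : ℝ))

/-- `v` is a measurable direction of steepest ascent for `f`. -/
def SteepestAscent (f : X → ℝ) (v : X → X) : Prop :=
  Measurable v ∧ ∀ x : X, (‖v x‖ = 0 ∨ ‖v x‖ = 1) ∧
    Tendsto (fun h : ℝ => (f (x + h • v x) - f x) / h) (𝓝[>] (0 : ℝ)) (𝓝 (locLip f x))

/-- The convex conjugate `φ*` of the penalty function. -/
def phiStar (φ : ℝ → ℝ≥0∞) (u : ℝ) : EReal :=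
  ⨆ v ∈ Ici (0 : ℝ), ((u * v : ℝ) : EReal) - ((φ v : ℝ≥0∞) : EReal)

/-! The values `I_{Θⁿ}(h) f` are suprema over growing sets, hence nondecreasing, and their limit
is the supremum over `⋃ Θⁿ`; it remains to compare this with the supremum over all of `L_p(μ;X)`.
In the Banach space `L_p(μ;X)` the gain `θ ↦ ∫ f(y + θ y) dμ` is locally Lipschitz (the `Lip_p`
bound together with Hölder's inequality), and the classes of `⋃ Θⁿ` form a dense set containing
`0`. The penalty `φ_h(‖θ‖)` is only monotone, not continuous, so a nonzero `θ` is approximated from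
inside the open ball of radius `‖θ‖`: `θ` lies in its closure, hence in the closure of its
intersection with the dense set, and along such approximants the gain converges while the penalty
stays at most `φ_h(‖θ‖)`. -/

theorem lintegral_enorm_rpow_mul_enorm_le {α E : Type*} [MeasurableSpace α] {μ : Measure α}
    [NormedAddCommGroup E] {p : ℝ} (hp : 1 < p) {w : α → ℝ} {g : α → E}
    (hw : AEStronglyMeasurable w μ) (hg : AEStronglyMeasurable g μ) :
    ∫⁻ a, ‖w a‖ₑ ^ (p - 1) * ‖g a‖ₑ ∂μ ≤
      eLpNorm w (ENNReal.ofReal p) μ ^ (p - 1) * eLpNorm g (ENNReal.ofReal p) μ := by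
  have hp0 : 0 < p := zero_lt_one.trans hp
  have hpq : p.HolderConjugate (p / (p - 1)) := Real.HolderConjugate.conjExponent hp
  simp only [eLpNorm_eq_lintegral_rpow_enorm_toReal (by simpa using hp0) ENNReal.ofReal_ne_top,
    ENNReal.toReal_ofReal hp0.le]
  have hw' : ((∫⁻ a, ‖w a‖ₑ ^ p ∂μ) ^ (1 / p)) ^ (p - 1) =
      (∫⁻ a, (‖w a‖ₑ ^ (p - 1)) ^ (p / (p - 1)) ∂μ) ^ (1 / (p / (p - 1))) := by
    simp_rw [← ENNReal.rpow_mul, hpq.sub_one_mul_conj]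
    congr 1
    field_simp
  rw [hw']
  exact ENNReal.lintegral_mul_le_Lp_mul_Lq μ hpq.symm (hw.enorm.pow_const _) hg.enorm

theorem memLp_id_of_mem_Pp {E : Type*} [NormedAddCommGroup E] [MeasurableSpace E]
    [SecondCountableTopology E] [BorelSpace E] {μ : Measure E} {p : ℝ} (hp : 0 < p)
    (hμ : μ ∈ Pp p) : MemLp (fun x => x) (ENNReal.ofReal p) μ := by
  refine ⟨aestronglyMeasurable_id, ?_⟩
  rw [eLpNorm_eq_lintegral_rpow_enorm_toReal (by simpa using hp) ENNReal.ofReal_ne_top,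
    ENNReal.toReal_ofReal hp.le]
  exact ENNReal.rpow_lt_top_of_nonneg (by positivity) hμ.2.ne

theorem dense_setOf_ae_eq_mem {α F : Type*} [MeasurableSpace α] {μ : Measure α}
    [NormedAddCommGroup F] {q : ℝ≥0∞} [Fact (1 ≤ q)] {S : Set (α → F)}
    (hS : ∀ θ ∈ S, MemLp θ q μ)
    (hdense : ∀ g : α → F, MemLp g q μ → ∀ ε : ℝ≥0∞, 0 < ε →
      ∃ θ ∈ S, eLpNorm (fun x => g x - θ x) q μ < ε) :
    Dense {g : Lp F q μ | ∃ θ ∈ S, g =ᵐ[μ] θ} := by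
  refine Metric.dense_iff.2 fun g r hr => ?_
  obtain ⟨θ, hθS, hθ⟩ := hdense g (Lp.memLp g) (ENNReal.ofReal r) (by simpa using hr)
  refine ⟨(hS θ hθS).toLp θ, ?_, θ, hθS, (hS θ hθS).coeFn_toLp⟩
  rw [Metric.mem_ball, dist_comm, Lp.dist_def,
    eLpNorm_congr_ae ((ae_eq_refl _).sub (hS θ hθS).coeFn_toLp)]
  exact ENNReal.toReal_lt_of_lt_ofReal hθ

theorem coe_sub_le_biSup_of_dense {E : Type*} [NormedAddCommGroup E] [NormedSpace ℝ E]
    {F : E → ℝ} (hF : Continuous F) {P : ℝ → ℝ≥0∞} (hP : MonotoneOn P (Ici 0))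
    {D : Set E} (hD : Dense D) (h0 : (0 : E) ∈ D) (x : E) :
    (F x : EReal) - P ‖x‖ ≤ ⨆ y ∈ D, (F y : EReal) - P ‖y‖ := by
  rcases eq_or_ne x 0 with rfl | hx
  · exact le_biSup (fun y => (F y : EReal) - P ‖y‖) h0
  rcases eq_or_ne (P ‖x‖) ⊤ with hPx | hPx
  · simp [hPx]
  set S := ⨆ y ∈ D, (F y : EReal) - P ‖y‖
  have hclosed : IsClosed {y : E | ((F y - (P ‖x‖).toReal : ℝ) : EReal) ≤ S} :=
    isClosed_le (continuous_coe_real_ereal.comp (hF.sub continuous_const)) continuous_const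
  have hball : D ∩ Metric.ball 0 ‖x‖ ⊆ {y : E | ((F y - (P ‖x‖).toReal : ℝ) : EReal) ≤ S} := by
    rintro y ⟨hyD, hy⟩
    rw [mem_ball_zero_iff] at hy
    have hPy : P ‖y‖ ≤ P ‖x‖ := hP (norm_nonneg y) (norm_nonneg x) hy.le
    calc ((F y - (P ‖x‖).toReal : ℝ) : EReal) = (F y : EReal) - P ‖x‖ := by
          rw [EReal.coe_sub, ← EReal.coe_ennreal_toReal hPx]
      _ ≤ (F y : EReal) - P ‖y‖ :=
          EReal.sub_le_sub le_rfl (EReal.coe_ennreal_le_coe_ennreal_iff.2 hPy)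
      _ ≤ S := le_biSup (fun y => (F y : EReal) - P ‖y‖) hyD
  have hx_mem : x ∈ closure (D ∩ Metric.ball 0 ‖x‖) := by
    have hx : x ∈ closure (Metric.ball 0 ‖x‖) := by
      rw [closure_ball 0 (norm_ne_zero_iff.2 hx)]
      exact mem_closedBall_zero_iff.2 le_rfl
    rw [inter_comm]
    exact closure_minimal (hD.open_subset_closure_inter Metric.isOpen_ball) isClosed_closure hx
  have := hclosed.closure_subset_iff.2 hball hx_mem
  simpa [EReal.coe_sub, ← EReal.coe_ennreal_toReal hPx] using this

def LipPWith {E : Type*} [NormedAddCommGroup E] (p L : ℝ) (f : E → ℝ) : Prop :=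
  ∀ x₁ x₂ : E, |f x₁ - f x₂| ≤ L * (1 + max ‖x₁‖ ‖x₂‖) ^ (p - 1) * ‖x₁ - x₂‖

namespace LipPWith

variable {E : Type*} [NormedAddCommGroup E] {p L : ℝ} {f : E → ℝ}

theorem abs_sub_le_of_max_le (hp : 1 ≤ p) (hL : 0 ≤ L) (hf : LipPWith p L f) {x₁ x₂ : E}
    {R : ℝ} (hR : 1 + max ‖x₁‖ ‖x₂‖ ≤ R) : |f x₁ - f x₂| ≤ L * R ^ (p - 1) * ‖x₁ - x₂‖ := by
  refine (hf x₁ x₂).trans ?_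
  gcongr

theorem continuous (hp : 1 ≤ p) (hL : 0 ≤ L) (hf : LipPWith p L f) : Continuous f := by
  refine continuous_iff_continuousAt.2 fun x => ?_
  refine continuousAt_of_locally_lipschitz zero_lt_one (L * (2 + ‖x‖) ^ (p - 1)) fun y hy => ?_
  rw [Real.dist_eq, dist_eq_norm]
  refine hf.abs_sub_le_of_max_le hp hL ?_
  have : ‖y‖ ≤ ‖x‖ + 1 := norm_le_norm_add_const_of_dist_le hy.le
  grind

theorem abs_le (hp : 0 ≤ p) (hL : 0 ≤ L) (hf : LipPWith p L f) (x : E) :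
    |f x| ≤ (L + |f 0|) * (1 + ‖x‖) ^ p := by
  have hone : 1 ≤ (1 + ‖x‖) ^ p := Real.one_le_rpow (by linarith [norm_nonneg x]) hp
  have hsub : (1 + ‖x‖) ^ (p - 1) * ‖x‖ ≤ (1 + ‖x‖) ^ p := by
    rw [Real.rpow_sub_one (by positivity), div_mul_eq_mul_div, div_le_iff₀ (by positivity)]
    gcongr
    linarith
  have h0 : |f x - f 0| ≤ L * (1 + ‖x‖) ^ (p - 1) * ‖x‖ := by
    simpa [max_eq_left (norm_nonneg x)] using hf x 0
  have := abs_sub_abs_le_abs_sub (f x) (f 0)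
  have := le_mul_of_one_le_right (abs_nonneg (f 0)) hone
  have : L * ((1 + ‖x‖) ^ (p - 1) * ‖x‖) ≤ L * (1 + ‖x‖) ^ p := by gcongr
  linarith

theorem enorm_sub_comp_add_le (hp : 1 ≤ p) (hL : 0 ≤ L) (hf : LipPWith p L f) (y a b : E) :
    ‖f (y + a) - f (y + b)‖ₑ ≤
      ENNReal.ofReal L * (‖1 + ‖y‖ + ‖a‖ + ‖b‖‖ₑ ^ (p - 1) * ‖a - b‖ₑ) := by
  have hR : 0 ≤ 1 + ‖y‖ + ‖a‖ + ‖b‖ := by positivity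
  have hmax : 1 + max ‖y + a‖ ‖y + b‖ ≤ 1 + ‖y‖ + ‖a‖ + ‖b‖ := by
    have := norm_add_le y a
    have := norm_add_le y b
    have := norm_nonneg a
    have := norm_nonneg b
    grind
  have := hf.abs_sub_le_of_max_le hp hL hmax
  rw [add_sub_add_left_eq_sub] at this
  rw [← ofReal_norm, Real.norm_eq_abs, ← ofReal_norm, ← ofReal_norm, Real.norm_of_nonneg hR,
    ENNReal.ofReal_rpow_of_nonneg hR (by linarith), ← ENNReal.ofReal_mul (by positivity),
    ← ENNReal.ofReal_mul hL, ← mul_assoc]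
  exact ENNReal.ofReal_le_ofReal this

variable [MeasurableSpace E] {μ : Measure E}

theorem integrable_comp_add [IsFiniteMeasure μ] (hp : 1 ≤ p) (hL : 0 ≤ L) (hf : LipPWith p L f)
    (hid : MemLp (fun y => y) (ENNReal.ofReal p) μ) {θ : E → E}
    (hθ : MemLp θ (ENNReal.ofReal p) μ) : Integrable (fun y => f (y + θ y)) μ := by
  have hW : MemLp (fun y => 1 + ‖y‖ + ‖θ y‖) (ENNReal.ofReal p) μ :=
    ((memLp_const (1 : ℝ)).add hid.norm).add hθ.norm
  have hmeas : AEStronglyMeasurable (fun y => f (y + θ y)) μ :=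
    (hf.continuous hp hL).comp_aestronglyMeasurable (hid.1.add hθ.1)
  refine (hW.integrable_norm_rpow'.const_mul (L + |f 0|)).mono' hmeas (ae_of_all _ fun y => ?_)
  rw [ENNReal.toReal_ofReal (by linarith), Real.norm_eq_abs, Real.norm_of_nonneg (by positivity)]
  refine (hf.abs_le (by linarith) hL _).trans ?_
  have : 1 + ‖y + θ y‖ ≤ 1 + ‖y‖ + ‖θ y‖ := by linarith [norm_add_le y (θ y)]
  gcongr

theorem abs_integral_comp_add_sub_le [IsFiniteMeasure μ] (hp : 1 < p) (hL : 0 ≤ L)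
    (hf : LipPWith p L f) (hid : MemLp (fun y => y) (ENNReal.ofReal p) μ) {θ₁ θ₂ : E → E}
    (h₁ : MemLp θ₁ (ENNReal.ofReal p) μ) (h₂ : MemLp θ₂ (ENNReal.ofReal p) μ) :
    |∫ y, f (y + θ₁ y) ∂μ - ∫ y, f (y + θ₂ y) ∂μ| ≤
      L * ((eLpNorm (fun y => 1 + ‖y‖) (ENNReal.ofReal p) μ).toReal +
        (eLpNorm θ₁ (ENNReal.ofReal p) μ).toReal + (eLpNorm θ₂ (ENNReal.ofReal p) μ).toReal) ^
          (p - 1) * (eLpNorm (θ₁ - θ₂) (ENNReal.ofReal p) μ).toReal := by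
  have hq : 1 ≤ ENNReal.ofReal p := ENNReal.one_le_ofReal.2 hp.le
  set V : E → ℝ := fun y => 1 + ‖y‖
  have hV : MemLp V (ENNReal.ofReal p) μ := (memLp_const (1 : ℝ)).add hid.norm
  set W : E → ℝ := fun y => V y + ‖θ₁ y‖ + ‖θ₂ y‖
  have hW : eLpNorm W (ENNReal.ofReal p) μ ≤ eLpNorm V (ENNReal.ofReal p) μ +
      eLpNorm θ₁ (ENNReal.ofReal p) μ + eLpNorm θ₂ (ENNReal.ofReal p) μ := by
    refine (eLpNorm_add_le (hV.1.add h₁.1.norm) h₂.1.norm hq).trans ?_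
    grw [eLpNorm_add_le hV.1 h₁.1.norm hq, eLpNorm_norm, eLpNorm_norm]
  have hbound : ∫⁻ y, ‖f (y + θ₁ y) - f (y + θ₂ y)‖ₑ ∂μ ≤
      ENNReal.ofReal L * ((eLpNorm V (ENNReal.ofReal p) μ + eLpNorm θ₁ (ENNReal.ofReal p) μ +
        eLpNorm θ₂ (ENNReal.ofReal p) μ) ^ (p - 1) * eLpNorm (θ₁ - θ₂) (ENNReal.ofReal p) μ) :=
    calc _ ≤ ∫⁻ y, ENNReal.ofReal L * (‖W y‖ₑ ^ (p - 1) * ‖(θ₁ - θ₂) y‖ₑ) ∂μ :=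
          lintegral_mono fun y => hf.enorm_sub_comp_add_le hp.le hL y (θ₁ y) (θ₂ y)
      _ = ENNReal.ofReal L * ∫⁻ y, ‖W y‖ₑ ^ (p - 1) * ‖(θ₁ - θ₂) y‖ₑ ∂μ :=
          lintegral_const_mul' _ _ ENNReal.ofReal_ne_top
      _ ≤ _ := by
          grw [lintegral_enorm_rpow_mul_enorm_le (w := W) hp
            ((hV.1.add h₁.1.norm).add h₂.1.norm) (h₁.sub h₂).1, hW]
          linarith
  have hfin : ENNReal.ofReal L * ((eLpNorm V (ENNReal.ofReal p) μ +
      eLpNorm θ₁ (ENNReal.ofReal p) μ + eLpNorm θ₂ (ENNReal.ofReal p) μ) ^ (p - 1) *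
        eLpNorm (θ₁ - θ₂) (ENNReal.ofReal p) μ) ≠ ⊤ := by
    have := hV.2.ne
    have := h₁.2.ne
    have := h₂.2.ne
    have := (h₁.sub h₂).2.ne
    have : 0 ≤ p - 1 := by linarith
    finiteness
  rw [← integral_sub (hf.integrable_comp_add hp.le hL hid h₁)
    (hf.integrable_comp_add hp.le hL hid h₂), ← Real.norm_eq_abs, ← toReal_enorm]
  calc _ ≤ _ := ENNReal.toReal_mono hfin ((enorm_integral_le_lintegral_enorm _).trans hbound)
    _ = _ := by
      rw [ENNReal.toReal_mul, ENNReal.toReal_mul, ENNReal.toReal_ofReal hL,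
        ← ENNReal.toReal_rpow, ENNReal.toReal_add (by finiteness) h₂.2.ne,
        ENNReal.toReal_add hV.2.ne h₁.2.ne, mul_assoc]

theorem continuous_integral_comp_add [Fact (1 ≤ ENNReal.ofReal p)] [IsFiniteMeasure μ]
    (hp : 1 < p) (hL : 0 ≤ L) (hf : LipPWith p L f)
    (hid : MemLp (fun y => y) (ENNReal.ofReal p) μ) :
    Continuous fun g : Lp E (ENNReal.ofReal p) μ => ∫ y, f (y + g y) ∂μ := by
  set c := (eLpNorm (fun y : E => 1 + ‖y‖) (ENNReal.ofReal p) μ).toReal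
  refine continuous_iff_continuousAt.2 fun g₀ => continuousAt_of_locally_lipschitz zero_lt_one
    (L * (c + (‖g₀‖ + 1) + ‖g₀‖) ^ (p - 1)) fun g hg => ?_
  rw [Real.dist_eq, Lp.dist_def]
  refine (hf.abs_integral_comp_add_sub_le hp hL hid (Lp.memLp g) (Lp.memLp g₀)).trans ?_
  rw [← Lp.norm_def, ← Lp.norm_def]
  have : ‖g‖ ≤ ‖g₀‖ + 1 := norm_le_norm_add_const_of_dist_le hg.le
  gcongr

end LipPWith

theorem monotoneOn_phih {φ : ℝ → ℝ≥0∞} (hφ : MonotoneOn φ (Ici 0)) (h : ℝ) :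
    MonotoneOn (phih φ h) (Ici 0) := by
  intro u hu v hv huv
  rcases le_or_gt h 0 with hh | hh
  · simp [phih, ENNReal.ofReal_of_nonpos hh]
  · exact mul_le_mul_right (hφ (div_nonneg hu hh.le) (div_nonneg hv hh.le)
      (div_le_div_of_nonneg_right huv hh.le)) _

def penalizedValue {E : Type*} [NormedAddCommGroup E] [MeasurableSpace E] (μ : Measure E)
    (φ : ℝ → ℝ≥0∞) (p h : ℝ) (f : E → ℝ) (θ : E → E) : EReal :=
  ((∫ x, f x ∂(μ.map fun y => y + θ y) : ℝ) : EReal) - ((phih φ h (lpnorm μ p θ) : ℝ≥0∞) : EReal)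

section penalizedValue

variable {E : Type*} [NormedAddCommGroup E] [MeasurableSpace E] {μ : Measure E}
  {φ : ℝ → ℝ≥0∞} {p h : ℝ} {f : E → ℝ}

theorem lpnorm_eq_toReal_eLpNorm (hp : 0 < p) {θ : E → E} (hθ : MemLp θ (ENNReal.ofReal p) μ) :
    lpnorm μ p θ = (eLpNorm θ (ENNReal.ofReal p) μ).toReal := by
  rw [hθ.eLpNorm_eq_integral_rpow_norm (by simpa using hp) ENNReal.ofReal_ne_top,
    ENNReal.toReal_ofReal (by positivity), ENNReal.toReal_ofReal hp.le, lpnorm, one_div]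

theorem ITheta_mono {Θ Θ' : Set (E → E)} (hΘ : Θ ⊆ Θ') :
    ITheta μ φ p Θ h f ≤ ITheta μ φ p Θ' h f :=
  biSup_mono hΘ

theorem penalizedValue_congr_ae {θ θ' : E → E} (hθ : θ =ᵐ[μ] θ') :
    penalizedValue μ φ p h f θ = penalizedValue μ φ p h f θ' := by
  have hmap : (fun y => y + θ y) =ᵐ[μ] fun y => y + θ' y := hθ.mono fun y hy => congrArg (y + ·) hy
  have hnorm : lpnorm μ p θ = lpnorm μ p θ' := by
    unfold lpnorm
    congr 1
    exact integral_congr_ae (hθ.mono fun y hy => by simp only [hy])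
  rw [penalizedValue, penalizedValue, Measure.map_congr hmap, hnorm]

theorem penalizedValue_Lp [SecondCountableTopology E] [BorelSpace E] [Fact (1 ≤ ENNReal.ofReal p)]
    (hp : 0 < p) (hf : Continuous f) (g : Lp E (ENNReal.ofReal p) μ) :
    penalizedValue μ φ p h f g = ((∫ y, f (y + g y) ∂μ : ℝ) : EReal) - phih φ h ‖g‖ := by
  have hg : AEMeasurable (fun y => y + g y) μ :=
    aemeasurable_id.add (Lp.aestronglyMeasurable g).aemeasurable
  rw [penalizedValue, integral_map hg hf.aestronglyMeasurable,
    lpnorm_eq_toReal_eLpNorm hp (Lp.memLp g), Lp.norm_def]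

theorem ITheta_eq_of_dense [NormedSpace ℝ E] [SecondCountableTopology E] [BorelSpace E]
    (hp : 1 < p) (hμ : μ ∈ Pp p) (hφ : MonotoneOn φ (Ici 0)) (hf : MemLipP p f) {S : Set (E → E)}
    (hS : ∀ θ ∈ S, MemLp θ (ENNReal.ofReal p) μ)
    (hdense : ∀ g : E → E, MemLp g (ENNReal.ofReal p) μ → ∀ ε : ℝ≥0∞, 0 < ε →
      ∃ θ ∈ S, eLpNorm (fun x => g x - θ x) (ENNReal.ofReal p) μ < ε)
    (h0 : (fun _ => 0) ∈ S) :
    ITheta μ φ p S h f = ITheta μ φ p {g | MemLp g (ENNReal.ofReal p) μ} h f := by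
  obtain ⟨L, hL, hf⟩ : ∃ L, 0 ≤ L ∧ LipPWith p L f := hf
  have : IsProbabilityMeasure μ := hμ.1
  have : Fact (1 ≤ ENNReal.ofReal p) := ⟨ENNReal.one_le_ofReal.2 hp.le⟩
  have hp0 : 0 < p := zero_lt_one.trans hp
  have hfc := hf.continuous hp.le hL
  have hcont := hf.continuous_integral_comp_add hp hL (memLp_id_of_mem_Pp hp0 hμ)
  set D := {g : Lp E (ENNReal.ofReal p) μ | ∃ θ ∈ S, g =ᵐ[μ] θ}
  have hD : Dense D := dense_setOf_ae_eq_mem hS hdense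
  have hD0 : (0 : Lp E (ENNReal.ofReal p) μ) ∈ D := ⟨_, h0, Lp.coeFn_zero _ _ _⟩
  refine le_antisymm (ITheta_mono hS) (iSup₂_le fun θ hθ => ?_)
  change penalizedValue μ φ p h f θ ≤ _
  rw [penalizedValue_congr_ae (MemLp.coeFn_toLp hθ).symm, penalizedValue_Lp hp0 hfc]
  refine (coe_sub_le_biSup_of_dense hcont (monotoneOn_phih hφ h) hD hD0 _).trans (iSup₂_le ?_)
  rintro g ⟨θ', hθ', hg⟩
  rw [← penalizedValue_Lp hp0 hfc, penalizedValue_congr_ae hg]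
  exact le_biSup _ hθ'

end penalizedValue

theorem stmt9_general (p : ℝ) (hp : 1 < p)
    (μ : Measure X) (hμ : μ ∈ Pp (X := X) p)
    (φ : ℝ → ℝ≥0∞) (hmono : MonotoneOn φ (Ici (0 : ℝ)))
    (Θ : ℕ → Set (X → X)) (hincr : ∀ n : ℕ, Θ n ⊆ Θ (n + 1))
    (hsub : ∀ n : ℕ, ∀ g ∈ Θ n, MemLp g (ENNReal.ofReal p) μ)
    (hdense : ∀ g : X → X, MemLp g (ENNReal.ofReal p) μ → ∀ ε : ℝ≥0∞, 0 < ε →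
      ∃ n : ℕ, ∃ θ ∈ Θ n, eLpNorm (fun x => g x - θ x) (ENNReal.ofReal p) μ < ε)
    (hzeroΘ : ∃ n : ℕ, (fun _ : X => (0 : X)) ∈ Θ n)
    (h : ℝ) (f : X → ℝ) (hf : MemLipP p f) :
    Monotone (fun n : ℕ => ITheta μ φ p (Θ n) h f) ∧
    Tendsto (fun n : ℕ => ITheta μ φ p (Θ n) h f) atTop
      (𝓝 (ITheta μ φ p {g : X → X | MemLp g (ENNReal.ofReal p) μ} h f)) := by
  have hmonoI : Monotone fun n => ITheta μ φ p (Θ n) h f :=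
    fun m n hmn => ITheta_mono (monotone_nat_of_le_succ hincr hmn)
  have hS : ∀ θ ∈ ⋃ n, Θ n, MemLp θ (ENNReal.ofReal p) μ := by
    simp only [mem_iUnion]
    rintro θ ⟨n, hn⟩
    exact hsub n θ hn
  have hdense' : ∀ g : X → X, MemLp g (ENNReal.ofReal p) μ → ∀ ε : ℝ≥0∞, 0 < ε →
      ∃ θ ∈ ⋃ n, Θ n, eLpNorm (fun x => g x - θ x) (ENNReal.ofReal p) μ < ε := by
    intro g hg ε hε
    obtain ⟨n, θ, hθ, hlt⟩ := hdense g hg ε hε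
    exact ⟨θ, mem_iUnion.2 ⟨n, hθ⟩, hlt⟩
  obtain ⟨n₀, h₀⟩ := hzeroΘ
  refine ⟨hmonoI, ?_⟩
  rw [← ITheta_eq_of_dense hp hμ hmono hf hS hdense' (mem_iUnion.2 ⟨n₀, h₀⟩), ITheta,
    iSup_iUnion]
  exact tendsto_atTop_iSup hmonoI

theorem stmt9 (p : ℝ) (hp : 1 < p)
    (μ : Measure X) (hμ : μ ∈ Pp (X := X) p)
    (φ : ℝ → ℝ≥0∞) (hmono : MonotoneOn φ (Ici (0 : ℝ))) (hzero : φ 0 = 0)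
    (hgrowth : 0 < liminf (fun v : ℝ => φ v / ENNReal.ofReal (v ^ p)) atTop)
    (Θ : ℕ → Set (X → X)) (hincr : ∀ n : ℕ, Θ n ⊆ Θ (n + 1))
    (hsub : ∀ n : ℕ, ∀ g ∈ Θ n, MemLp g (ENNReal.ofReal p) μ)
    (hdense : ∀ g : X → X, MemLp g (ENNReal.ofReal p) μ → ∀ ε : ℝ≥0∞, 0 < ε →
      ∃ n : ℕ, ∃ θ ∈ Θ n, eLpNorm (fun x => g x - θ x) (ENNReal.ofReal p) μ < ε)
    (hzeroΘ : ∃ n : ℕ, (fun _ : X => (0 : X)) ∈ Θ n)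
    (h : ℝ) (hh : 0 < h) (f : X → ℝ) (hf : MemLipP p f) :
    Monotone (fun n : ℕ => ITheta μ φ p (Θ n) h f) ∧
    Tendsto (fun n : ℕ => ITheta μ φ p (Θ n) h f) atTop
      (𝓝 (ITheta μ φ p {g : X → X | MemLp g (ENNReal.ofReal p) μ} h f)) :=
  stmt9_general p hp μ hμ φ hmono Θ hincr hsub hdense hzeroΘ h f hf
end
end

section
/- Let f ∈ Lip_p. Then there exist h₀ > 0 and a ≥ 0 (depending only on f and the penalty function φ) such that for all h ∈ (0,h₀], I(h)f = sup over ν ∈ P_p with W_p(μ,ν) ≤ ah of ( ∫_X f dν − φ_h(W_p(μ,ν)) ). -/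
open MeasureTheory Filter Set
open scoped Topology ENNReal NNReal RealInnerProductSpace

noncomputable section

variable {X : Type*} [NormedAddCommGroup X] [InnerProductSpace ℝ X]
  [SecondCountableTopology X] [CompleteSpace X] [MeasurableSpace X] [BorelSpace X]

/-!
For `ν` at distance `w = W_p(μ, ν)` from `μ`, integrating the `Lip_p` bound of `f` against a
coupling and applying Hölder's and Minkowski's inequalities gives
`∫ f dν - ∫ f dμ ≤ L (1 + 2 m + w)^(p-1) w`, where `m` is the `p`-th root of the `p`-th moment
of `μ`. The growth condition on `φ` gives `φ_h(w) ≥ c w^p / h^(p-1)` once `w / h` is large. So for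
`h ≤ h₀` and `w > a h` the penalty exceeds the gain, such a `ν` does worse than `ν = μ`, whose
value is `∫ f dμ`, and the supremum may be restricted to `W_p(μ, ν) ≤ a h`.
-/

lemma mul_rpow_sub_one_mul_le_mul_rpow {p L c B h w : ℝ} (hp : 1 < p) (hL : 0 ≤ L) (hc : 0 < c)
    (hB : 0 ≤ B) (hh : 0 < h) (hw : 0 < w)
    (hh₀ : h ≤ 1 / (2 * (L / c) ^ (1 / (p - 1)) + 1))
    (hwB : 2 * (L / c) ^ (1 / (p - 1)) * B * h ≤ w) :
    L * (B + w) ^ (p - 1) * w ≤ h * (c * (w / h) ^ p) := by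
  set κ := (L / c) ^ (1 / (p - 1))
  have hκ0 : 0 ≤ κ := by positivity
  -- raised to the power `p - 1`, this is the claim
  have hshort : κ * (h * (B + w)) ≤ w := by
    have : 2 * κ * h ≤ 1 := by
      rw [le_div_iff₀ (by positivity)] at hh₀; nlinarith
    nlinarith
  have hpow : L / c * (h * (B + w)) ^ (p - 1) ≤ w ^ (p - 1) := by
    have := Real.rpow_le_rpow (by positivity) hshort (by linarith : 0 ≤ p - 1)
    rwa [Real.mul_rpow hκ0 (by positivity), ← Real.rpow_mul (by positivity),
      one_div_mul_cancel (by linarith), Real.rpow_one] at this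
  have hhp : 0 < h ^ (p - 1) := by positivity
  calc L * (B + w) ^ (p - 1) * w
      = c * (L / c * (h * (B + w)) ^ (p - 1)) * w / h ^ (p - 1) := by
        rw [Real.mul_rpow hh.le (by positivity)]; field_simp
    _ ≤ c * w ^ (p - 1) * w / h ^ (p - 1) := by gcongr
    _ = h * (c * (w / h) ^ p) := by
        rw [Real.div_rpow hw.le hh.le, Real.rpow_sub_one hw.ne', Real.rpow_sub_one hh.ne']
        field_simp

lemma exists_ofReal_mul_rpow_le {φ : ℝ → ℝ≥0∞} {p : ℝ}
    (hφ : 0 < liminf (fun v : ℝ => φ v / ENNReal.ofReal (v ^ p)) atTop) :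
    ∃ c > 0, ∃ V : ℝ, ∀ v, V ≤ v → ENNReal.ofReal (c * v ^ p) ≤ φ v := by
  obtain ⟨r, hr0, hr⟩ := ENNReal.lt_iff_exists_nnreal_btwn.mp hφ
  obtain ⟨V, hV⟩ := eventually_atTop.mp (eventually_lt_of_lt_liminf hr)
  refine ⟨r, by exact_mod_cast hr0, V, fun v hv => ?_⟩
  rw [ENNReal.ofReal_mul r.coe_nonneg, ENNReal.ofReal_coe_nnreal]
  exact ENNReal.mul_le_of_le_div (hV v hv).le

lemma ofReal_le_phih_of_lt {φ : ℝ → ℝ≥0∞} {p L c B V h w : ℝ} (hp : 1 < p) (hL : 0 ≤ L)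
    (hc : 0 < c) (hB : 0 ≤ B) (hV : ∀ v, V ≤ v → ENNReal.ofReal (c * v ^ p) ≤ φ v) (hh : 0 < h)
    (hh₀ : h ≤ 1 / (2 * (L / c) ^ (1 / (p - 1)) + 1))
    (hw : max V (2 * (L / c) ^ (1 / (p - 1)) * B) * h < w) :
    ENNReal.ofReal (L * (B + w) ^ (p - 1) * w) ≤ phih φ h w := by
  have hfar : 2 * (L / c) ^ (1 / (p - 1)) * B * h ≤ w :=
    (mul_le_mul_of_nonneg_right (le_max_right _ _) hh.le).trans hw.le
  have hw0 : 0 < w := lt_of_le_of_lt (by positivity) hw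
  have hV' : V ≤ w / h :=
    (le_div_iff₀ hh).2 ((mul_le_mul_of_nonneg_right (le_max_left _ _) hh.le).trans hw.le)
  calc ENNReal.ofReal (L * (B + w) ^ (p - 1) * w)
      ≤ ENNReal.ofReal (h * (c * (w / h) ^ p)) :=
        ENNReal.ofReal_le_ofReal (mul_rpow_sub_one_mul_le_mul_rpow hp hL hc hB hh hw0 hh₀ hfar)
    _ = ENNReal.ofReal h * ENNReal.ofReal (c * (w / h) ^ p) := ENNReal.ofReal_mul hh.le
    _ ≤ phih φ h w := by unfold phih; gcongr; exact hV _ hV'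

lemma EReal.coe_sub_coe_ennreal_le {x y : ℝ} {e : ℝ≥0∞} (h : ENNReal.ofReal (x - y) ≤ e) :
    (x : EReal) - e ≤ y := by
  rcases eq_or_ne e ⊤ with rfl | he
  · simp
  · rw [← EReal.coe_ennreal_toReal he, ← EReal.coe_sub, EReal.coe_le_coe_iff]
    linarith [(ENNReal.ofReal_le_iff_le_toReal he).mp h]

lemma phih_zero {φ : ℝ → ℝ≥0∞} (hφ : φ 0 = 0) (h : ℝ) : phih φ h 0 = 0 := by
  simp [phih, hφ]

lemma lintegral_rpow_rpow_le_add_of_le {α : Type*} [MeasurableSpace α] {μ : Measure α} {p : ℝ}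
    {F G H : α → ℝ≥0∞} (hp : 1 ≤ p) (hG : AEMeasurable G μ) (hH : AEMeasurable H μ)
    (hle : ∀ a, F a ≤ G a + H a) :
    (∫⁻ a, F a ^ p ∂μ) ^ (1 / p) ≤ (∫⁻ a, G a ^ p ∂μ) ^ (1 / p) + (∫⁻ a, H a ^ p ∂μ) ^ (1 / p) :=
  (ENNReal.rpow_le_rpow (lintegral_mono fun a => ENNReal.rpow_le_rpow (hle a) (by linarith))
    (one_div_nonneg.2 (by linarith))).trans (ENNReal.lintegral_Lp_add_le hG hH hp)

section Coupling

variable {Ω : Type*} [MeasurableSpace Ω] {μ ν : Measure Ω} {π : Measure (Ω × Ω)}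

lemma isCoupling_prod (μ ν : Measure Ω) [IsProbabilityMeasure μ] [IsProbabilityMeasure ν] :
    IsCoupling μ ν (μ.prod ν) :=
  ⟨by simp, by simp⟩

lemma isCoupling_diag (μ : Measure Ω) : IsCoupling μ μ (μ.map fun x => (x, x)) := by
  constructor <;>
  · rw [Measure.map_map (by fun_prop) (by fun_prop)]
    exact Measure.map_id

lemma IsCoupling.isProbabilityMeasure [IsProbabilityMeasure μ] (hπ : IsCoupling μ ν π) :
    IsProbabilityMeasure π := by
  have : IsProbabilityMeasure (π.map Prod.fst) := by rw [hπ.1]; infer_instance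
  exact Measure.isProbabilityMeasure_of_map Prod.fst

lemma IsCoupling.lintegral_comp_fst (hπ : IsCoupling μ ν π) {g : Ω → ℝ≥0∞} (hg : Measurable g) :
    ∫⁻ q, g q.1 ∂π = ∫⁻ x, g x ∂μ := by
  rw [← hπ.1, lintegral_map hg measurable_fst]

lemma IsCoupling.lintegral_comp_snd (hπ : IsCoupling μ ν π) {g : Ω → ℝ≥0∞} (hg : Measurable g) :
    ∫⁻ q, g q.2 ∂π = ∫⁻ x, g x ∂ν := by
  rw [← hπ.2, lintegral_map hg measurable_snd]

end Coupling

section Wasserstein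

variable {E : Type*} [NormedAddCommGroup E] [MeasurableSpace E]
  {p : ℝ} {μ ν : Measure E} {π : Measure (E × E)}

def transportCost (p : ℝ) (π : Measure (E × E)) : ℝ≥0∞ :=
  ∫⁻ q, (‖q.1 - q.2‖₊ : ℝ≥0∞) ^ p ∂π

def momentNorm (p : ℝ) (ν : Measure E) : ℝ≥0∞ :=
  (∫⁻ x, (‖x‖₊ : ℝ≥0∞) ^ p ∂ν) ^ (1 / p)

lemma Wp_le_transportCost_rpow (hp : 0 ≤ p) (hπ : IsCoupling μ ν π) :
    Wp p μ ν ≤ transportCost p π ^ (1 / p) :=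
  ENNReal.rpow_le_rpow (biInf_le _ hπ) (one_div_nonneg.2 hp)

lemma Wp_eq_iInf (hp : 0 < p) (μ ν : Measure E) :
    Wp p μ ν = ⨅ π : {π : Measure (E × E) // IsCoupling μ ν π}, transportCost p π.1 ^ (1 / p) := by
  rw [Wp, iInf_subtype']
  exact (ENNReal.orderIsoRpow (1 / p) (by positivity)).map_iInf _

lemma momentNorm_ne_top (hp : 0 < p) (hν : ν ∈ Pp p) : momentNorm p ν ≠ ⊤ :=
  ENNReal.rpow_ne_top_of_nonneg (by positivity) hν.2.ne

variable [BorelSpace E]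

lemma IsCoupling.transportCost_rpow_le (hp : 1 ≤ p) (hπ : IsCoupling μ ν π) :
    transportCost p π ^ (1 / p) ≤ momentNorm p μ + momentNorm p ν := by
  refine (lintegral_rpow_rpow_le_add_of_le (G := fun q : E × E => (‖q.1‖₊ : ℝ≥0∞))
    (H := fun q : E × E => (‖q.2‖₊ : ℝ≥0∞)) hp (by fun_prop) (by fun_prop) fun q => ?_).trans_eq ?_
  · exact_mod_cast nnnorm_sub_le q.1 q.2
  · rw [momentNorm, momentNorm,
      hπ.lintegral_comp_fst (g := fun x => (‖x‖₊ : ℝ≥0∞) ^ p) (by fun_prop),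
      hπ.lintegral_comp_snd (g := fun x => (‖x‖₊ : ℝ≥0∞) ^ p) (by fun_prop)]

lemma Wp_ne_top (hp : 1 ≤ p) (hμ : μ ∈ Pp p) (hν : ν ∈ Pp p) : Wp p μ ν ≠ ⊤ := by
  have := hμ.1; have := hν.1
  refine ne_top_of_le_ne_top ?_ ((Wp_le_transportCost_rpow (by linarith)
    (isCoupling_prod μ ν)).trans ((isCoupling_prod μ ν).transportCost_rpow_le hp))
  exact ENNReal.add_ne_top.2
    ⟨momentNorm_ne_top (by linarith) hμ, momentNorm_ne_top (by linarith) hν⟩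

variable [SecondCountableTopology E]

lemma measurable_enorm_fst_sub_snd : Measurable fun q : E × E => (‖q.1 - q.2‖₊ : ℝ≥0∞) :=
  (measurable_fst.sub measurable_snd).nnnorm.coe_nnreal_ennreal

lemma Wp_self (hp : 0 < p) (μ : Measure E) : Wp p μ μ = 0 := by
  refine le_antisymm ((Wp_le_transportCost_rpow hp.le (isCoupling_diag μ)).trans_eq ?_) bot_le
  rw [transportCost, lintegral_map (measurable_enorm_fst_sub_snd.pow_const p) (by fun_prop)]
  simp [ENNReal.zero_rpow_of_pos hp, hp]

lemma IsCoupling.momentNorm_le_add (hp : 1 ≤ p) (hπ : IsCoupling μ ν π) :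
    momentNorm p ν ≤ momentNorm p μ + transportCost p π ^ (1 / p) := by
  rw [momentNorm, ← hπ.lintegral_comp_snd (g := fun x => (‖x‖₊ : ℝ≥0∞) ^ p) (by fun_prop),
    momentNorm, ← hπ.lintegral_comp_fst (g := fun x => (‖x‖₊ : ℝ≥0∞) ^ p) (by fun_prop)]
  refine lintegral_rpow_rpow_le_add_of_le (G := fun q : E × E => (‖q.1‖₊ : ℝ≥0∞))
    (H := fun q : E × E => (‖q.1 - q.2‖₊ : ℝ≥0∞)) hp (by fun_prop)
    measurable_enorm_fst_sub_snd.aemeasurable fun q => ?_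
  calc (‖q.2‖₊ : ℝ≥0∞) = ‖q.1 - (q.1 - q.2)‖₊ := by simp
    _ ≤ ‖q.1‖₊ + ‖q.1 - q.2‖₊ := by exact_mod_cast nnnorm_sub_le _ _

lemma momentNorm_le_add_Wp (hp : 1 ≤ p) :
    momentNorm p ν ≤ momentNorm p μ + Wp p μ ν := by
  rw [Wp_eq_iInf (by linarith), ENNReal.add_iInf]
  exact le_iInf fun π => π.2.momentNorm_le_add hp

end Wasserstein

section LipP

variable {E : Type*} [NormedAddCommGroup E] {p : ℝ} {f : E → ℝ}

lemma MemLipP.continuous (hp : 1 ≤ p) (hf : MemLipP p f) : Continuous f := by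
  obtain ⟨L, hL0, hL⟩ := hf
  refine continuous_iff_continuousAt.2 fun x => continuousAt_of_locally_lipschitz zero_lt_one
    (L * (2 + ‖x‖) ^ (p - 1)) fun y hy => ?_
  rw [dist_eq_norm] at hy
  rw [Real.dist_eq, dist_eq_norm]
  have hmax : max ‖y‖ ‖x‖ ≤ 1 + ‖x‖ :=
    max_le (by linarith [norm_le_norm_add_norm_sub' y x]) (by linarith)
  have hbase : 1 + max ‖y‖ ‖x‖ ≤ 2 + ‖x‖ := by linarith
  calc |f y - f x| ≤ L * (1 + max ‖y‖ ‖x‖) ^ (p - 1) * ‖y - x‖ := hL y x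
    _ ≤ L * (2 + ‖x‖) ^ (p - 1) * ‖y - x‖ := by
      gcongr L * ?_ * _
      exact Real.rpow_le_rpow (by positivity) hbase (by linarith)

lemma MemLipP.integrable [MeasurableSpace E] [BorelSpace E]
    [SecondCountableTopology E] (hp : 1 ≤ p) (hf : MemLipP p f)
    {ν : Measure E} (hν : ν ∈ Pp p) : Integrable f ν := by
  obtain ⟨L, hL0, hL⟩ := id hf
  have := hν.1
  have hp0 : 0 < p := by linarith
  have hid : MemLp id (ENNReal.ofReal p) ν := by
    refine ⟨aestronglyMeasurable_id, (eLpNorm_lt_top_iff_lintegral_rpow_enorm_lt_top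
      (by simp [hp0]) ENNReal.ofReal_ne_top).2 ?_⟩
    simp only [ENNReal.toReal_ofReal hp0.le, id]
    exact hν.2
  have hgrowth : Integrable (fun x : E => (1 + ‖x‖) ^ p) ν := by
    have := ((memLp_const (1 : ℝ)).add hid.norm).integrable_norm_rpow'
    have habs (x : E) : |1 + ‖x‖| = 1 + ‖x‖ := abs_of_nonneg (by positivity)
    simpa [ENNReal.toReal_ofReal hp0.le, habs] using this
  refine ((integrable_const |f 0|).add (hgrowth.const_mul L)).mono'
    (hf.continuous hp).aestronglyMeasurable (Eventually.of_forall fun x => ?_)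
  change ‖f x‖ ≤ |f 0| + L * (1 + ‖x‖) ^ p
  have hx := hL x 0
  rw [norm_zero, max_eq_left (norm_nonneg x), sub_zero] at hx
  have hpow : (1 + ‖x‖) ^ (p - 1) * ‖x‖ ≤ (1 + ‖x‖) ^ p := by
    calc (1 + ‖x‖) ^ (p - 1) * ‖x‖ ≤ (1 + ‖x‖) ^ (p - 1) * (1 + ‖x‖) := by gcongr; linarith
      _ = (1 + ‖x‖) ^ p := by rw [← Real.rpow_add_one (by positivity), sub_add_cancel]
  rw [Real.norm_eq_abs, mul_assoc] at *
  linarith [abs_sub_abs_le_abs_sub (f x) (f 0), mul_le_mul_of_nonneg_left hpow hL0]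

lemma enorm_sub_le_of_memLipP_bound {L : ℝ} (hp : 1 ≤ p) (hL0 : 0 ≤ L)
    (hL : ∀ x₁ x₂ : E, |f x₁ - f x₂| ≤ L * (1 + max ‖x₁‖ ‖x₂‖) ^ (p - 1) * ‖x₁ - x₂‖) (x y : E) :
    ‖f y - f x‖ₑ ≤ ENNReal.ofReal L * ((1 + (‖x‖₊ : ℝ≥0∞) + ‖y‖₊) ^ (p - 1) * ‖x - y‖₊) := by
  have hmax : 1 + max ‖y‖ ‖x‖ ≤ 1 + ‖x‖ + ‖y‖ := by
    have := max_le_add_of_nonneg (norm_nonneg y) (norm_nonneg x); linarith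
  have h : |f y - f x| ≤ L * (1 + ‖x‖ + ‖y‖) ^ (p - 1) * ‖x - y‖ := by
    calc _ ≤ L * (1 + max ‖y‖ ‖x‖) ^ (p - 1) * ‖y - x‖ := hL y x
      _ ≤ _ := by
        rw [norm_sub_rev]
        gcongr L * ?_ * _
        exact Real.rpow_le_rpow (by positivity) hmax (by linarith)
  rw [Real.enorm_eq_ofReal_abs]
  refine (ENNReal.ofReal_le_ofReal h).trans_eq ?_
  rw [ENNReal.ofReal_mul (by positivity), ENNReal.ofReal_mul hL0,
    ← ENNReal.ofReal_rpow_of_nonneg (by positivity) (by linarith), mul_assoc,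
    ENNReal.ofReal_add (by positivity) (norm_nonneg _),
    ENNReal.ofReal_add zero_le_one (norm_nonneg _), ENNReal.ofReal_one, ofReal_norm, ofReal_norm,
    ofReal_norm]
  rfl

end LipP

section Gain

variable {E : Type*} [NormedAddCommGroup E] [MeasurableSpace E] [BorelSpace E]
  {p L : ℝ} {f : E → ℝ} {μ ν : Measure E} {π : Measure (E × E)}

lemma IsCoupling.ofReal_integral_sub_integral_le (hπ : IsCoupling μ ν π) (hf : Continuous f)
    (hfμ : Integrable f μ) (hfν : Integrable f ν) :
    ENNReal.ofReal (∫ x, f x ∂ν - ∫ x, f x ∂μ) ≤ ∫⁻ q, ‖f q.2 - f q.1‖ₑ ∂π := by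
  have h₁ : Integrable (fun q : E × E => f q.1) π :=
    (show Integrable f (π.map Prod.fst) by rwa [hπ.1]).comp_measurable measurable_fst
  have h₂ : Integrable (fun q : E × E => f q.2) π :=
    (show Integrable f (π.map Prod.snd) by rwa [hπ.2]).comp_measurable measurable_snd
  have hsub : ∫ x, f x ∂ν - ∫ x, f x ∂μ = ∫ q, (f q.2 - f q.1) ∂π := by
    rw [integral_sub h₂ h₁, ← hπ.1, ← hπ.2,
      integral_map measurable_fst.aemeasurable hf.aestronglyMeasurable,
      integral_map measurable_snd.aemeasurable hf.aestronglyMeasurable]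
  rw [hsub]
  exact (Real.ofReal_le_enorm _).trans (enorm_integral_le_lintegral_enorm _)

lemma IsCoupling.lintegral_one_add_nnnorm_add_nnnorm_rpow_le [IsProbabilityMeasure μ] (hp : 1 ≤ p)
    (hπ : IsCoupling μ ν π) :
    (∫⁻ q, (1 + (‖q.1‖₊ : ℝ≥0∞) + ‖q.2‖₊) ^ p ∂π) ^ (1 / p) ≤
      1 + momentNorm p μ + momentNorm p ν := by
  have := hπ.isProbabilityMeasure
  calc (∫⁻ q, (1 + (‖q.1‖₊ : ℝ≥0∞) + ‖q.2‖₊) ^ p ∂π) ^ (1 / p)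
      ≤ (∫⁻ q : E × E, (1 + (‖q.1‖₊ : ℝ≥0∞)) ^ p ∂π) ^ (1 / p) +
          (∫⁻ q : E × E, (‖q.2‖₊ : ℝ≥0∞) ^ p ∂π) ^ (1 / p) :=
        lintegral_rpow_rpow_le_add_of_le hp (by fun_prop) (by fun_prop) fun q => le_rfl
    _ ≤ (∫⁻ q : E × E, (1 : ℝ≥0∞) ^ p ∂π) ^ (1 / p) +
          (∫⁻ q : E × E, (‖q.1‖₊ : ℝ≥0∞) ^ p ∂π) ^ (1 / p) +
          (∫⁻ q : E × E, (‖q.2‖₊ : ℝ≥0∞) ^ p ∂π) ^ (1 / p) := by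
        gcongr
        exact lintegral_rpow_rpow_le_add_of_le hp (by fun_prop) (by fun_prop) fun q => le_rfl
    _ = 1 + momentNorm p μ + momentNorm p ν := by
        rw [hπ.lintegral_comp_fst (g := fun x => (‖x‖₊ : ℝ≥0∞) ^ p) (by fun_prop),
          hπ.lintegral_comp_snd (g := fun x => (‖x‖₊ : ℝ≥0∞) ^ p) (by fun_prop)]
        simp [momentNorm]

variable [SecondCountableTopology E]

lemma IsCoupling.lintegral_enorm_sub_le_mul_transportCost [IsProbabilityMeasure μ]
    (hp : 1 < p) (hπ : IsCoupling μ ν π) (hL0 : 0 ≤ L)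
    (hL : ∀ x₁ x₂ : E, |f x₁ - f x₂| ≤ L * (1 + max ‖x₁‖ ‖x₂‖) ^ (p - 1) * ‖x₁ - x₂‖) :
    ∫⁻ q, ‖f q.2 - f q.1‖ₑ ∂π ≤
      ENNReal.ofReal L * (1 + momentNorm p μ + momentNorm p ν) ^ (p - 1) *
        transportCost p π ^ (1 / p) := by
  have hpq := Real.HolderConjugate.conjExponent hp
  set g : E × E → ℝ≥0∞ := fun q => 1 + ‖q.1‖₊ + ‖q.2‖₊
  have hHolder : ∫⁻ q, g q ^ (p - 1) * ‖q.1 - q.2‖₊ ∂π ≤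
      ((∫⁻ q, g q ^ p ∂π) ^ (1 / p)) ^ (p - 1) * transportCost p π ^ (1 / p) := by
    refine (ENNReal.lintegral_mul_le_Lp_mul_Lq π hpq.symm (by fun_prop) (by fun_prop)).trans_eq ?_
    have hexp : 1 / p * (p - 1) = 1 / p.conjExponent := by
      rw [one_div, one_div, ← hpq.one_sub_inv]
      field_simp
    simp_rw [← ENNReal.rpow_mul, hpq.sub_one_mul_conj, hexp]
    rfl
  calc ∫⁻ q, ‖f q.2 - f q.1‖ₑ ∂π
      ≤ ∫⁻ q, ENNReal.ofReal L * (g q ^ (p - 1) * ‖q.1 - q.2‖₊) ∂π :=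
        lintegral_mono fun q => enorm_sub_le_of_memLipP_bound hp.le hL0 hL q.1 q.2
    _ = ENNReal.ofReal L * ∫⁻ q, g q ^ (p - 1) * ‖q.1 - q.2‖₊ ∂π :=
      lintegral_const_mul' _ _ ENNReal.ofReal_ne_top
    _ ≤ _ := by
      rw [mul_assoc]
      gcongr
      exact hHolder.trans (by gcongr; exact hπ.lintegral_one_add_nnnorm_add_nnnorm_rpow_le hp.le)

lemma ofReal_integral_sub_integral_le_mul_Wp (hp : 1 < p) (hL0 : 0 ≤ L)
    (hL : ∀ x₁ x₂ : E, |f x₁ - f x₂| ≤ L * (1 + max ‖x₁‖ ‖x₂‖) ^ (p - 1) * ‖x₁ - x₂‖)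
    (hμ : μ ∈ Pp p) (hν : ν ∈ Pp p) :
    ENNReal.ofReal (∫ x, f x ∂ν - ∫ x, f x ∂μ) ≤
      ENNReal.ofReal L * (1 + momentNorm p μ + momentNorm p ν) ^ (p - 1) * Wp p μ ν := by
  have := hμ.1
  have := hν.1
  have hf : MemLipP p f := ⟨L, hL0, hL⟩
  have : Nonempty {π : Measure (E × E) // IsCoupling μ ν π} := ⟨⟨_, isCoupling_prod μ ν⟩⟩
  have hC : ENNReal.ofReal L * (1 + momentNorm p μ + momentNorm p ν) ^ (p - 1) ≠ ⊤ :=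
    ENNReal.mul_ne_top ENNReal.ofReal_ne_top (ENNReal.rpow_ne_top_of_nonneg (by linarith)
      (by simp [momentNorm_ne_top (by linarith) hμ, momentNorm_ne_top (by linarith) hν]))
  rw [Wp_eq_iInf (by linarith), ENNReal.mul_iInf fun h => absurd h hC]
  exact le_iInf fun π => (π.2.ofReal_integral_sub_integral_le (hf.continuous hp.le)
    (hf.integrable hp.le hμ) (hf.integrable hp.le hν)).trans
      (π.2.lintegral_enorm_sub_le_mul_transportCost hp hL0 hL)

lemma integral_sub_integral_le (hp : 1 < p) (hL0 : 0 ≤ L)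
    (hL : ∀ x₁ x₂ : E, |f x₁ - f x₂| ≤ L * (1 + max ‖x₁‖ ‖x₂‖) ^ (p - 1) * ‖x₁ - x₂‖)
    (hμ : μ ∈ Pp p) (hν : ν ∈ Pp p) :
    ∫ x, f x ∂ν - ∫ x, f x ∂μ ≤
      L * (1 + 2 * (momentNorm p μ).toReal + (Wp p μ ν).toReal) ^ (p - 1) * (Wp p μ ν).toReal := by
  set M := (momentNorm p μ).toReal
  set w := (Wp p μ ν).toReal
  have hM : momentNorm p μ = ENNReal.ofReal M :=
    (ENNReal.ofReal_toReal (momentNorm_ne_top (by linarith) hμ)).symm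
  have hw : Wp p μ ν = ENNReal.ofReal w := (ENNReal.ofReal_toReal (Wp_ne_top hp.le hμ hν)).symm
  rw [← ENNReal.ofReal_le_ofReal_iff (by positivity)]
  calc ENNReal.ofReal (∫ x, f x ∂ν - ∫ x, f x ∂μ)
      ≤ ENNReal.ofReal L * (1 + momentNorm p μ + momentNorm p ν) ^ (p - 1) * Wp p μ ν :=
        ofReal_integral_sub_integral_le_mul_Wp hp hL0 hL hμ hν
    _ ≤ ENNReal.ofReal L * (1 + 2 * momentNorm p μ + Wp p μ ν) ^ (p - 1) * Wp p μ ν := by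
        have hbase : 1 + momentNorm p μ + momentNorm p ν ≤ 1 + 2 * momentNorm p μ + Wp p μ ν :=
          calc 1 + momentNorm p μ + momentNorm p ν
              ≤ 1 + momentNorm p μ + (momentNorm p μ + Wp p μ ν) := by
                gcongr; exact momentNorm_le_add_Wp hp.le
            _ = 1 + 2 * momentNorm p μ + Wp p μ ν := by ring
        gcongr _ * ?_ ^ _ * _
    _ = ENNReal.ofReal (L * (1 + 2 * M + w) ^ (p - 1) * w) := by
        rw [hM, hw, ENNReal.ofReal_mul (by positivity), ENNReal.ofReal_mul hL0,
          ← ENNReal.ofReal_rpow_of_nonneg (by positivity) (by linarith),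
          ENNReal.ofReal_add (by positivity) (by positivity),
          ENNReal.ofReal_add zero_le_one (by positivity), ENNReal.ofReal_mul zero_le_two,
          ENNReal.ofReal_one, ENNReal.ofReal_ofNat]

end Gain

theorem stmt11_general (p : ℝ) (hp : 1 < p)
    (μ : Measure X) (hμ : μ ∈ Pp (X := X) p)
    (φ : ℝ → ℝ≥0∞) (hzero : φ 0 = 0)
    (hgrowth : 0 < liminf (fun v : ℝ => φ v / ENNReal.ofReal (v ^ p)) atTop)
    (f : X → ℝ) (hf : MemLipP p f) :
    ∃ h₀ : ℝ, 0 < h₀ ∧ ∃ a : ℝ, 0 ≤ a ∧ ∀ h : ℝ, 0 < h → h ≤ h₀ →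
      Ifun μ φ p h f =
        ⨆ ν ∈ {ν | ν ∈ Pp (X := X) p ∧ Wp p μ ν ≤ ENNReal.ofReal (a * h)},
          ((∫ x, f x ∂ν : ℝ) : EReal)
            - ((phih φ h (Wp p μ ν).toReal : ℝ≥0∞) : EReal) := by
  obtain ⟨L, hL0, hL⟩ := hf
  obtain ⟨c, hc, V, hV⟩ := exists_ofReal_mul_rpow_le hgrowth
  set B := 1 + 2 * (momentNorm p μ).toReal
  set κ := (L / c) ^ (1 / (p - 1))
  set a := max V (2 * κ * B)
  refine ⟨1 / (2 * κ + 1), by positivity, a, le_max_of_le_right (by positivity),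
    fun h hh hh₀ => le_antisymm (iSup₂_le fun ν hν => ?_) (biSup_mono fun ν hν => hν.1)⟩
  by_cases hnear : Wp p μ ν ≤ ENNReal.ofReal (a * h)
  · exact le_biSup (fun ν => ((∫ x, f x ∂ν : ℝ) : EReal) - (phih φ h (Wp p μ ν).toReal : EReal))
      ⟨hν, hnear⟩
  have hfar : a * h < (Wp p μ ν).toReal := not_le.1 fun hle => hnear <|
    (ENNReal.ofReal_toReal (Wp_ne_top hp.le hμ hν)).symm ▸ ENNReal.ofReal_le_ofReal hle
  have hμa : μ ∈ {ν | ν ∈ Pp p ∧ Wp p μ ν ≤ ENNReal.ofReal (a * h)} :=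
    ⟨hμ, by rw [Wp_self (by linarith)]; exact zero_le⟩
  refine le_trans ?_ (le_biSup _ hμa)
  rw [Wp_self (by linarith), ENNReal.toReal_zero, phih_zero hzero, EReal.coe_ennreal_zero, sub_zero]
  exact EReal.coe_sub_coe_ennreal_le <|
    (ENNReal.ofReal_le_ofReal (integral_sub_integral_le hp hL0 hL hμ hν)).trans
      (ofReal_le_phih_of_lt hp hL0 hc (by positivity) hV hh hh₀ hfar)

theorem stmt11 (p : ℝ) (hp : 1 < p)
    (μ : Measure X) (hμ : μ ∈ Pp (X := X) p)
    (φ : ℝ → ℝ≥0∞) (hmono : MonotoneOn φ (Ici (0 : ℝ))) (hzero : φ 0 = 0)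
    (hgrowth : 0 < liminf (fun v : ℝ => φ v / ENNReal.ofReal (v ^ p)) atTop)
    (f : X → ℝ) (hf : MemLipP p f) :
    ∃ h₀ : ℝ, 0 < h₀ ∧ ∃ a : ℝ, 0 ≤ a ∧ ∀ h : ℝ, 0 < h → h ≤ h₀ →
      Ifun μ φ p h f =
        ⨆ ν ∈ {ν | ν ∈ Pp (X := X) p ∧ Wp p μ ν ≤ ENNReal.ofReal (a * h)},
          ((∫ x, f x ∂ν : ℝ) : EReal)
            - ((phih φ h (Wp p μ ν).toReal : ℝ≥0∞) : EReal) :=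
  stmt11_general p hp μ hμ φ hzero hgrowth f hf
end
end

section
/- Let f : X → ℝ be Fréchet differentiable with continuous gradient ∇f : X → X satisfying L_f := sup_{x∈X} ‖∇f(x)‖/(1+‖x‖)^{p−1} < ∞. Then: (i) f ∈ Lip_p; (ii) |f|_Lip(x) = ‖∇f(x)‖ for all x ∈ X; and (iii) the map v : X → X given by v(x) = ∇f(x)/‖∇f(x)‖ if ∇f(x) ≠ 0 and v(x) = 0 otherwise is a measurable direction of steepest ascent for f. -/
open MeasureTheory Filter Set
open scoped Topology ENNReal NNReal RealInnerProductSpace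

noncomputable section

variable {X : Type*} [NormedAddCommGroup X] [InnerProductSpace ℝ X]
  [SecondCountableTopology X] [CompleteSpace X] [MeasurableSpace X] [BorelSpace X]

/-! Fréchet differentiability bounds the difference quotients `(f (x + h • u) - f x) / h` by
`‖∇f x‖ + ε` uniformly in `‖u‖ ≤ 1` for small `h > 0`, while along `u = ∇f x / ‖∇f x‖` they tend
to `⟪∇f x, u⟫ = ‖∇f x‖`; hence their supremum over unit directions tends to `‖∇f x‖`. The `Lip_p`
bound is the mean value inequality on the ball of radius `max ‖x₁‖ ‖x₂‖`, on which the gradient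
is bounded by `L_f (1 + max ‖x₁‖ ‖x₂‖) ^ (p - 1)` because `p ≥ 1`. -/

theorem exists_norm_le_mul_one_add_norm_rpow {E F : Type*} [NormedAddCommGroup E]
    [NormedAddCommGroup F] {g : E → F} {q : ℝ}
    (hg : BddAbove (range fun x => ‖g x‖ / (1 + ‖x‖) ^ q)) :
    ∃ C, 0 ≤ C ∧ ∀ x, ‖g x‖ ≤ C * (1 + ‖x‖) ^ q := by
  obtain ⟨C, hC⟩ := hg
  have hbound (x : E) : ‖g x‖ / (1 + ‖x‖) ^ q ≤ C := hC (mem_range_self x)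
  refine ⟨C, (div_nonneg (norm_nonneg _) (by positivity)).trans (hbound 0), fun x => ?_⟩
  rw [← div_le_iff₀ (by positivity)]
  exact hbound x

section UnitDir

variable {E : Type*} [NormedAddCommGroup E] [NormedSpace ℝ E]

open Classical in
def unitDir (v : E) : E := if v = 0 then 0 else ‖v‖⁻¹ • v

theorem norm_unitDir_eq_zero_or_one (v : E) : ‖unitDir v‖ = 0 ∨ ‖unitDir v‖ = 1 := by
  by_cases hv : v = 0
  · simp [unitDir, hv]
  · right
    rw [unitDir, if_neg hv, norm_smul, norm_inv, norm_norm,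
      inv_mul_cancel₀ (norm_ne_zero_iff.mpr hv)]

theorem measurable_unitDir [MeasurableSpace E] [BorelSpace E] :
    Measurable (unitDir : E → E) :=
  Measurable.ite (measurableSet_singleton 0) measurable_const
    (measurable_norm.inv.smul measurable_id)

end UnitDir

section Gradient

variable {E : Type*} [NormedAddCommGroup E] [InnerProductSpace ℝ E]

theorem real_inner_unitDir_self (v : E) : ⟪v, unitDir v⟫ = ‖v‖ := by
  by_cases hv : v = 0
  · simp [unitDir, hv]
  · rw [unitDir, if_neg hv, real_inner_smul_right, real_inner_self_eq_norm_mul_norm,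
      inv_mul_cancel_left₀ (norm_ne_zero_iff.mpr hv)]

variable [CompleteSpace E] {f : E → ℝ} {g x : E}

theorem HasGradientAt.tendsto_slope_right (hf : HasGradientAt f g x) (u : E) :
    Tendsto (fun h : ℝ => (f (x + h • u) - f x) / h) (𝓝[>] 0) (𝓝 ⟪g, u⟫) := by
  have := (hf.hasFDerivAt.hasLineDerivAt u).tendsto_slope_zero_right
  simpa only [InnerProductSpace.toDual_apply_apply, smul_eq_mul, inv_mul_eq_div] using this

theorem HasGradientAt.eventually_slope_le (hf : HasGradientAt f g x) {ε : ℝ} (hε : 0 < ε) :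
    ∀ᶠ h in 𝓝[>] (0 : ℝ), ∀ u : E, ‖u‖ ≤ 1 → (f (x + h • u) - f x) / h ≤ ‖g‖ + ε := by
  obtain ⟨δ, hδ, hball⟩ := Metric.eventually_nhds_iff.mp
    ((hasGradientAt_iff_isLittleO.mp hf).def hε)
  filter_upwards [Ioo_mem_nhdsGT hδ] with h ⟨h0, hδh⟩ u hu
  have hhu : ‖h • u‖ ≤ h := by
    rw [norm_smul, Real.norm_of_nonneg h0.le]
    exact mul_le_of_le_one_right h0.le hu
  have hrem := hball (y := x + h • u) (by rw [dist_eq_norm, add_sub_cancel_left]; linarith)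
  rw [add_sub_cancel_left, Real.norm_eq_abs] at hrem
  rw [div_le_iff₀ h0]
  calc f (x + h • u) - f x ≤ ⟪g, h • u⟫ + ε * ‖h • u‖ := by
        linarith [le_abs_self (f (x + h • u) - f x - ⟪g, h • u⟫)]
    _ ≤ (‖g‖ + ε) * h := by
      rw [add_mul]
      gcongr
      exact (real_inner_le_norm _ _).trans (by gcongr)

theorem HasGradientAt.tendsto_sSup_slope (hf : HasGradientAt f g x) :
    Tendsto (fun h : ℝ =>
        sSup ((fun u : E => (f (x + h • u) - f x) / h) '' {u : E | ‖u‖ = 0 ∨ ‖u‖ = 1}))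
      (𝓝[>] 0) (𝓝 ‖g‖) := by
  have hsteep := hf.tendsto_slope_right (unitDir g)
  rw [real_inner_unitDir_self] at hsteep
  have hsphere {u : E} (hu : ‖u‖ = 0 ∨ ‖u‖ = 1) : ‖u‖ ≤ 1 := by
    rcases hu with hu | hu <;> simp [hu]
  rw [tendsto_order]
  constructor
  · intro a ha
    filter_upwards [hsteep.eventually (eventually_gt_nhds ha), hf.eventually_slope_le one_pos]
      with h hlt hle
    refine hlt.trans_le (le_csSup ⟨‖g‖ + 1, ?_⟩
      (mem_image_of_mem _ (norm_unitDir_eq_zero_or_one g)))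
    rintro _ ⟨u, hu, rfl⟩
    exact hle u (hsphere hu)
  · intro a ha
    filter_upwards [hf.eventually_slope_le (half_pos (sub_pos.mpr ha))] with h hle
    refine (csSup_le (Nonempty.image _ ⟨0, by simp⟩) ?_).trans_lt
      (by linarith : ‖g‖ + (a - ‖g‖) / 2 < a)
    rintro _ ⟨u, hu, rfl⟩
    exact hle u (hsphere hu)

theorem locLip_eq_of_hasGradientAt (hf : HasGradientAt f g x) : locLip f x = ‖g‖ :=
  hf.tendsto_sSup_slope.limsup_eq

theorem steepestAscent_unitDir_gradient [MeasurableSpace E] [BorelSpace E]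
    (hf : Differentiable ℝ f) (hcont : Continuous (gradient f)) :
    SteepestAscent f fun x => unitDir (gradient f x) := by
  refine ⟨measurable_unitDir.comp hcont.measurable,
    fun x => ⟨norm_unitDir_eq_zero_or_one _, ?_⟩⟩
  have hgrad := (hf x).hasGradientAt
  rw [locLip_eq_of_hasGradientAt hgrad, ← real_inner_unitDir_self]
  exact hgrad.tendsto_slope_right _

theorem memLipP_of_norm_gradient_le {p C : ℝ} (hp : 1 ≤ p) (hf : Differentiable ℝ f)
    (hC : 0 ≤ C) (hgrad : ∀ x, ‖gradient f x‖ ≤ C * (1 + ‖x‖) ^ (p - 1)) : MemLipP p f := by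
  refine ⟨C, hC, fun x₁ x₂ => ?_⟩
  set R := max ‖x₁‖ ‖x₂‖
  have hball {y : E} : y ∈ Metric.closedBall (0 : E) R ↔ ‖y‖ ≤ R := by simp
  have hderiv : ∀ z ∈ Metric.closedBall (0 : E) R, ‖fderiv ℝ f z‖ ≤ C * (1 + R) ^ (p - 1) := by
    intro z hz
    rw [← toDual_gradient, LinearIsometryEquiv.norm_map]
    refine (hgrad z).trans ?_
    gcongr
    linarith [hball.mp hz]
  simpa only [Real.norm_eq_abs] using
    (convex_closedBall (0 : E) R).norm_image_sub_le_of_norm_fderiv_le (fun z _ => hf z) hderiv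
      (hball.mpr (le_max_right _ _)) (hball.mpr (le_max_left _ _))

end Gradient

open Classical in
theorem stmt17 (p : ℝ) (hp : 1 < p) (f : X → ℝ)
    (hdiff : Differentiable ℝ f) (hcont : Continuous fun x => gradient f x)
    (hLf : BddAbove (Set.range fun x : X => ‖gradient f x‖ / (1 + ‖x‖) ^ (p - 1))) :
    MemLipP p f ∧ (∀ x : X, locLip f x = ‖gradient f x‖) ∧
      SteepestAscent f
        (fun x => if gradient f x = 0 then 0 else ‖gradient f x‖⁻¹ • gradient f x) := by
  obtain ⟨C, hC, hgrad⟩ := exists_norm_le_mul_one_add_norm_rpow hLf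
  exact ⟨memLipP_of_norm_gradient_le hp.le hdiff hC hgrad,
    fun x => locLip_eq_of_hasGradientAt (hdiff x).hasGradientAt,
    steepestAscent_unitDir_gradient hdiff hcont⟩
end
end

section
/- If μ ∈ P_p is nonatomic, then for every ν ∈ P_p there exists θ ∈ L_p(μ;X) such that ν = μ_θ, i.e., ν is the pushforward of μ under the map y ↦ y + θ(y). -/
open MeasureTheory Filter Set
open scoped Topology ENNReal NNReal RealInnerProductSpace

noncomputable section

variable {X : Type*} [NormedAddCommGroup X] [InnerProductSpace ℝ X]
  [SecondCountableTopology X] [CompleteSpace X] [MeasurableSpace X] [BorelSpace X]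

/-!
On `ℝ`, the cdf `F` of a nonatomic probability measure `μ` is continuous, so `F` pushes `μ` to
the uniform distribution on `[0, 1]`, while the quantile function `Q` of `ν` (the generalized
inverse of its cdf) pushes the uniform distribution to `ν`; hence `ν` is the image of `μ` under
`Q ∘ F`. By the Borel isomorphism theorem the same holds on `X`, which is uncountable since `μ`
has no atoms. If `μ.map T = ν`, then `θ = T - id` works: `T` lies in `L_p(μ)` because its
`p`-th moment under `μ` is that of `ν`.
-/

namespace MeasureTheory

lemma nullSingletonClass_of_forall_exists_measure_lt {α : Type*} [MeasurableSpace α]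
    [MeasurableSingletonClass α] {μ : Measure α}
    (h : ∀ B : Set α, MeasurableSet B → 0 < μ B →
      ∃ A : Set α, MeasurableSet A ∧ A ⊆ B ∧ 0 < μ A ∧ μ A < μ B) :
    NullSingletonClass μ := by
  refine ⟨fun x => ?_⟩
  by_contra hx
  obtain ⟨A, -, hAx, hA0, hAlt⟩ := h {x} (measurableSet_singleton x) (pos_iff_ne_zero.2 hx)
  rcases subset_singleton_iff_eq.1 hAx with rfl | rfl
  · simp at hA0
  · exact hAlt.ne rfl

lemma uncountable_of_nullSingletonClass {α : Type*} [MeasurableSpace α] (μ : Measure α)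
    [NeZero μ] [NullSingletonClass μ] : Uncountable α := by
  by_contra h
  have : Countable α := not_uncountable_iff.1 h
  exact (Measure.measure_univ_ne_zero.2 (NeZero.ne μ)) (countable_univ.measure_zero μ)

end MeasureTheory

namespace ProbabilityTheory

section cdf

variable {μ : Measure ℝ} [IsProbabilityMeasure μ]

lemma continuous_cdf [NullSingletonClass μ] : Continuous (cdf μ) := by
  refine continuous_iff_continuousAt.2 fun a => ?_
  rw [(monotone_cdf μ).continuousAt_iff_leftLim_eq_rightLim, (cdf μ).rightLim_eq]
  have h := (cdf μ).measure_singleton a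
  rw [measure_cdf, measure_singleton, eq_comm, ENNReal.ofReal_eq_zero] at h
  exact le_antisymm ((monotone_cdf μ).leftLim_le le_rfl) (by linarith)

lemma measure_cdf_le [NullSingletonClass μ] {c : ℝ} (hc : c ≤ 1) :
    μ {y | cdf μ y ≤ c} = ENNReal.ofReal c := by
  set s := {y | cdf μ y ≤ c}
  rcases s.eq_empty_or_nonempty with hs | hs
  · have hc0 : c ≤ 0 := ge_of_tendsto (tendsto_cdf_atBot μ)
      (Eventually.of_forall fun y => (not_le.1 fun hy => hs.subset hy).le)
    simp [hs, ENNReal.ofReal_eq_zero.2 hc0]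
  by_cases hbdd : BddAbove s
  · set a := sSup s
    have ha : a ∈ s := (isClosed_le continuous_cdf continuous_const).csSup_mem hs hbdd
    have hs_eq : s = Iic a := Subset.antisymm (fun y hy => le_csSup hbdd hy)
      fun y hy => (monotone_cdf μ hy).trans ha
    have hca : c ≤ cdf μ a := by
      refine ge_of_tendsto (continuous_cdf.continuousWithinAt (s := Ioi a)).tendsto ?_
      filter_upwards [self_mem_nhdsWithin] with y hy
      exact (not_le.1 fun h => (not_le.2 hy) (le_csSup hbdd h)).le
    rw [hs_eq, ← ofReal_cdf, le_antisymm ha hca]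
  · have hs_univ : s = univ := eq_univ_of_forall fun x =>
      let ⟨_, hy, hxy⟩ := not_bddAbove_iff.1 hbdd x
      (monotone_cdf μ hxy.le).trans hy
    have h1c : 1 ≤ c := le_of_tendsto (tendsto_cdf_atTop μ)
      (Eventually.of_forall fun y => (hs_univ ▸ mem_univ y : y ∈ s))
    simp [hs_univ, le_antisymm hc h1c]

lemma volume_restrict_Icc_zero_one_Iic {c : ℝ} (hc : c ≤ 1) :
    volume.restrict (Icc (0 : ℝ) 1) (Iic c) = ENNReal.ofReal c := by
  rw [Measure.restrict_apply measurableSet_Iic,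
    show Iic c ∩ Icc 0 1 = Icc 0 c by
      ext x
      simp only [mem_inter_iff, mem_Iic, mem_Icc]
      exact ⟨fun h => ⟨h.2.1, h.1⟩, fun h => ⟨h.2, h.1, h.2.trans hc⟩⟩,
    Real.volume_Icc, sub_zero]

theorem map_cdf_eq [NullSingletonClass μ] : μ.map (cdf μ) = volume.restrict (Icc 0 1) := by
  refine Measure.ext_of_Iic _ _ fun c => ?_
  rw [Measure.map_apply (monotone_cdf μ).measurable measurableSet_Iic]
  rcases le_or_gt c 1 with hc | hc
  · exact (measure_cdf_le hc).trans (volume_restrict_Icc_zero_one_Iic hc).symm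
  · have hpre : cdf μ ⁻¹' Iic c = univ :=
      eq_univ_of_forall fun y => (cdf_le_one μ y).trans hc.le
    have hIcc : Icc (0 : ℝ) 1 ⊆ Iic c := fun x hx => hx.2.trans hc.le
    rw [hpre, Measure.restrict_apply measurableSet_Iic, inter_eq_right.2 hIcc]
    simp

end cdf

/-- The generalized inverse of `cdf ν`; its values off `Ioo 0 1` are junk. -/
def quantile (ν : Measure ℝ) (u : ℝ) : ℝ := sInf {x | u ≤ cdf ν x}

section quantile

variable {ν : Measure ℝ}

lemma quantile_le_iff {u : ℝ} (hu : u ∈ Ioo 0 1) {x : ℝ} :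
    quantile ν u ≤ x ↔ u ≤ cdf ν x := by
  set t := {z | u ≤ cdf ν z}
  have hne : t.Nonempty :=
    ((tendsto_cdf_atTop ν).eventually (eventually_gt_nhds hu.2)).exists.imp fun _ h => h.le
  have hbdd : BddBelow t := by
    obtain ⟨z₀, hz₀⟩ := eventually_atBot.1
      ((tendsto_cdf_atBot ν).eventually (eventually_lt_nhds hu.1))
    exact ⟨z₀, fun z hz => le_of_not_gt fun hzz => (hz.trans_lt (hz₀ z hzz.le)).false⟩
  refine ⟨fun h => ?_, fun h => csInf_le hbdd h⟩
  have hmem : u ≤ cdf ν (sInf t) := by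
    refine ge_of_tendsto (((cdf ν).right_continuous _).mono Ioi_subset_Ici_self).tendsto ?_
    filter_upwards [self_mem_nhdsWithin] with z hz
    obtain ⟨w, hw, hwz⟩ := exists_lt_of_csInf_lt hne hz
    exact hw.trans (monotone_cdf ν hwz.le)
  exact hmem.trans (monotone_cdf ν h)

lemma monotoneOn_quantile : MonotoneOn (quantile ν) (Ioo 0 1) := fun _ hu _ hv huv =>
  (quantile_le_iff hu).2 (huv.trans ((quantile_le_iff hv).1 le_rfl))

lemma aemeasurable_quantile : AEMeasurable (quantile ν) (volume.restrict (Icc 0 1)) := by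
  rw [← restrict_Ioo_eq_restrict_Icc]
  exact aemeasurable_restrict_of_monotoneOn measurableSet_Ioo monotoneOn_quantile

theorem map_quantile_eq [IsProbabilityMeasure ν] :
    (volume.restrict (Icc 0 1)).map (quantile ν) = ν := by
  refine Measure.ext_of_Iic _ _ fun x => ?_
  have hpre : quantile ν ⁻¹' Iic x ∩ Ioo 0 1 = Iic (cdf ν x) ∩ Ioo 0 1 := by
    ext u
    simp only [mem_inter_iff, mem_preimage, mem_Iic]
    exact and_congr_left fun hu => quantile_le_iff hu
  rw [Measure.map_apply_of_aemeasurable aemeasurable_quantile measurableSet_Iic,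
    ← restrict_Ioo_eq_restrict_Icc, Measure.restrict_apply' measurableSet_Ioo, hpre,
    ← Measure.restrict_apply' measurableSet_Ioo, restrict_Ioo_eq_restrict_Icc,
    volume_restrict_Icc_zero_one_Iic (cdf_le_one ν x), ofReal_cdf]

end quantile

theorem exists_aemeasurable_map_eq_real (μ ν : Measure ℝ) [IsProbabilityMeasure μ]
    [NullSingletonClass μ] [IsProbabilityMeasure ν] :
    ∃ T : ℝ → ℝ, AEMeasurable T μ ∧ μ.map T = ν := by
  have hQ : AEMeasurable (quantile ν) (μ.map (cdf μ)) :=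
    map_cdf_eq (μ := μ) ▸ aemeasurable_quantile
  refine ⟨quantile ν ∘ cdf μ, hQ.comp_measurable (monotone_cdf μ).measurable, ?_⟩
  rw [← hQ.map_map_of_aemeasurable (monotone_cdf μ).measurable.aemeasurable, map_cdf_eq,
    map_quantile_eq]

end ProbabilityTheory

theorem MeasureTheory.exists_aemeasurable_map_eq {α β : Type*} [MeasurableSpace α]
    [StandardBorelSpace α] [MeasurableSpace β] [StandardBorelSpace β] [Uncountable β]
    (μ : Measure α) [IsProbabilityMeasure μ] [NullSingletonClass μ]
    (ν : Measure β) [IsProbabilityMeasure ν] :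
    ∃ T : α → β, AEMeasurable T μ ∧ μ.map T = ν := by
  have := uncountable_of_nullSingletonClass μ
  let e : α ≃ᵐ ℝ := PolishSpace.measurableEquivOfNotCountable not_countable not_countable
  let f : β ≃ᵐ ℝ := PolishSpace.measurableEquivOfNotCountable not_countable not_countable
  have : NullSingletonClass (μ.map e) := ⟨fun r => by
    rw [e.map_apply]
    exact (subsingleton_singleton.preimage e.injective).measure_zero μ⟩
  have := Measure.isProbabilityMeasure_map (μ := μ) e.measurable.aemeasurable
  have := Measure.isProbabilityMeasure_map (μ := ν) f.measurable.aemeasurable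
  obtain ⟨S, hS, hSν⟩ :=
    ProbabilityTheory.exists_aemeasurable_map_eq_real (μ.map e) (ν.map f)
  have hSe : AEMeasurable (S ∘ e) μ := hS.comp_measurable e.measurable
  refine ⟨f.symm ∘ S ∘ e, f.symm.measurable.comp_aemeasurable hSe, ?_⟩
  rw [← f.symm.measurable.aemeasurable.map_map_of_aemeasurable hSe,
    ← hS.map_map_of_aemeasurable e.measurable.aemeasurable, hSν, MeasurableEquiv.map_symm_map]

lemma memLp_id_of_mem_Pp_s18 {E : Type*} [NormedAddCommGroup E] [MeasurableSpace E]
    [OpensMeasurableSpace E] [SecondCountableTopology E] {p : ℝ}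
    {ν : Measure E} (hν : ν ∈ Pp p) :
    MemLp id (ENNReal.ofReal p) ν := by
  rcases le_or_gt p 0 with hp | hp
  · rw [ENNReal.ofReal_eq_zero.2 hp]
    exact memLp_zero_iff_aestronglyMeasurable.2 aestronglyMeasurable_id
  · refine ⟨aestronglyMeasurable_id, ?_⟩
    rw [eLpNorm_lt_top_iff_lintegral_rpow_enorm_lt_top (by simpa) ENNReal.ofReal_ne_top,
      ENNReal.toReal_ofReal hp.le]
    exact hν.2

theorem stmt18_general (p : ℝ)
    (μ : Measure X) (hμ : μ ∈ Pp (X := X) p)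
    (hna : ∀ B : Set X, MeasurableSet B → 0 < μ B →
      ∃ A : Set X, MeasurableSet A ∧ A ⊆ B ∧ 0 < μ A ∧ μ A < μ B) :
    ∀ ν ∈ Pp (X := X) p, ∃ θ : X → X,
      MemLp θ (ENNReal.ofReal p) μ ∧ ν = μ.map fun y => y + θ y := by
  intro ν hν
  have := hμ.1
  have := hν.1
  have := nullSingletonClass_of_forall_exists_measure_lt hna
  have := uncountable_of_nullSingletonClass μ
  obtain ⟨T, hT, rfl⟩ := exists_aemeasurable_map_eq μ ν
  have hTp : MemLp T (ENNReal.ofReal p) μ :=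
    (memLp_map_measure_iff aestronglyMeasurable_id hT).1 (memLp_id_of_mem_Pp_s18 hν)
  refine ⟨T - id, hTp.sub (memLp_id_of_mem_Pp_s18 hμ), ?_⟩
  simp

theorem stmt18 (p : ℝ) (hp : 1 < p)
    (μ : Measure X) (hμ : μ ∈ Pp (X := X) p)
    (hna : ∀ B : Set X, MeasurableSet B → 0 < μ B →
      ∃ A : Set X, MeasurableSet A ∧ A ⊆ B ∧ 0 < μ A ∧ μ A < μ B) :
    ∀ ν ∈ Pp (X := X) p, ∃ θ : X → X,
      MemLp θ (ENNReal.ofReal p) μ ∧ ν = μ.map fun y => y + θ y :=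
  stmt18_general p μ hμ hna
end
end

section
/- Let μ be a finite Borel measure on ℝ and p ∈ [1,∞). Then the linear span of the indicator functions {1_{[K,∞)} : K ∈ ℝ} is dense in L_p(μ). If moreover ∫_ℝ |y|^p μ(dy) < ∞, then the linear span of the call payoff functions {x ↦ max(x−K, 0) : K ∈ ℝ} is dense in L_p(μ). -/
/-!
Continuous compactly supported functions are dense in `L^p(μ)`, and each of them is a uniform
limit of the step functions `x ↦ g (⌊x / t⌋ * t)`, which are finite combinations of indicators
`1_{[K,∞)}`; as `μ` is finite, uniform convergence implies `L^p(μ)` convergence.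
In turn `1_{[K,∞)}` is the `L^p(μ)` limit, as `δ → 0⁺`, of the call spread
`δ⁻¹ (max (x - K + δ) 0 - max (x - K) 0)`, which differs from it by at most `1_{[K-δ,K)}`.
-/

open MeasureTheory Set Filter Topology
open scoped ENNReal

noncomputable section

section LpClosure

variable {α E : Type*} [MeasurableSpace α] [NormedAddCommGroup E] {p : ℝ≥0∞} {μ : Measure α}

/-- The closure of `S` for the `L^p(μ)` seminorm, taken among a.e.-strongly-measurable functions,
on which `eLpNorm` satisfies the triangle inequality. -/
def lpClosure (p : ℝ≥0∞) (μ : Measure α) (S : Set (α → E)) : Set (α → E) :=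
  {f | AEStronglyMeasurable f μ ∧ ∀ ε, 0 < ε → ∃ g ∈ S, eLpNorm (f - g) p μ < ε}

lemma eLpNorm_sub_lt_of_lt_half (hp : 1 ≤ p) {f g h : α → E} (hf : AEStronglyMeasurable f μ)
    (hg : AEStronglyMeasurable g μ) (hh : AEStronglyMeasurable h μ) {ε : ℝ≥0∞}
    (hfg : eLpNorm (f - g) p μ < ε / 2) (hgh : eLpNorm (g - h) p μ < ε / 2) :
    eLpNorm (f - h) p μ < ε :=
  calc eLpNorm (f - h) p μ = eLpNorm ((f - g) + (g - h)) p μ := by rw [sub_add_sub_cancel]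
    _ ≤ eLpNorm (f - g) p μ + eLpNorm (g - h) p μ := eLpNorm_add_le (hf.sub hg) (hg.sub hh) hp
    _ < ε / 2 + ε / 2 := ENNReal.add_lt_add hfg hgh
    _ = ε := ENNReal.add_halves ε

lemma lpClosure_subset_of_subset_lpClosure (hp : 1 ≤ p) {S T : Set (α → E)}
    (hT : ∀ g ∈ T, AEStronglyMeasurable g μ) (hST : S ⊆ lpClosure p μ T) :
    lpClosure p μ S ⊆ lpClosure p μ T := by
  refine fun f ⟨hf, hfS⟩ ↦ ⟨hf, fun ε hε ↦ ?_⟩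
  obtain ⟨g, hgS, hfg⟩ := hfS (ε / 2) (ENNReal.half_pos hε.ne')
  obtain ⟨hg, hgT⟩ := hST hgS
  obtain ⟨h, hhT, hgh⟩ := hgT (ε / 2) (ENNReal.half_pos hε.ne')
  exact ⟨h, hhT, eLpNorm_sub_lt_of_lt_half hp hf hg (hT h hhT) hfg hgh⟩

section Submodule

variable [NormedSpace ℝ E] {W : Submodule ℝ (α → E)}

lemma zero_mem_lpClosure : (0 : α → E) ∈ lpClosure p μ W :=
  ⟨aestronglyMeasurable_zero, fun _ hε ↦ ⟨0, W.zero_mem, by simpa using hε⟩⟩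

lemma add_mem_lpClosure (hW : ∀ g ∈ W, AEStronglyMeasurable g μ) (hp : 1 ≤ p) {f₁ f₂ : α → E}
    (h₁ : f₁ ∈ lpClosure p μ W) (h₂ : f₂ ∈ lpClosure p μ W) : f₁ + f₂ ∈ lpClosure p μ W := by
  refine ⟨h₁.1.add h₂.1, fun ε hε ↦ ?_⟩
  obtain ⟨g₁, hg₁, hfg₁⟩ := h₁.2 (ε / 2) (ENNReal.half_pos hε.ne')
  obtain ⟨g₂, hg₂, hfg₂⟩ := h₂.2 (ε / 2) (ENNReal.half_pos hε.ne')
  refine ⟨g₁ + g₂, W.add_mem hg₁ hg₂, ?_⟩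
  calc eLpNorm (f₁ + f₂ - (g₁ + g₂)) p μ = eLpNorm ((f₁ - g₁) + (f₂ - g₂)) p μ := by
        rw [add_sub_add_comm]
    _ ≤ eLpNorm (f₁ - g₁) p μ + eLpNorm (f₂ - g₂) p μ :=
        eLpNorm_add_le (h₁.1.sub (hW g₁ hg₁)) (h₂.1.sub (hW g₂ hg₂)) hp
    _ < ε / 2 + ε / 2 := ENNReal.add_lt_add hfg₁ hfg₂
    _ = ε := ENNReal.add_halves ε

lemma smul_mem_lpClosure (c : ℝ) {f : α → E} (hf : f ∈ lpClosure p μ W) :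
    c • f ∈ lpClosure p μ W := by
  refine ⟨hf.1.const_smul c, fun ε hε ↦ ?_⟩
  obtain ⟨η, hη, hηc⟩ := ENNReal.exists_pos_mul_lt enorm_ne_top hε.ne' (a := ‖c‖ₑ)
  obtain ⟨g, hgW, hfg⟩ := hf.2 η hη
  refine ⟨c • g, W.smul_mem c hgW, ?_⟩
  calc eLpNorm (c • f - c • g) p μ = ‖c‖ₑ * eLpNorm (f - g) p μ := by
        rw [← smul_sub, eLpNorm_const_smul]
    _ ≤ η * ‖c‖ₑ := by rw [mul_comm]; gcongr
    _ < ε := hηc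

lemma span_subset_lpClosure (hW : ∀ g ∈ W, AEStronglyMeasurable g μ) (hp : 1 ≤ p)
    {S : Set (α → E)} (hS : S ⊆ lpClosure p μ W) :
    (Submodule.span ℝ S : Set (α → E)) ⊆ lpClosure p μ W := fun f hf ↦ by
  induction hf using Submodule.span_induction with
  | mem f hf => exact hS hf
  | zero => exact zero_mem_lpClosure
  | add f₁ f₂ _ _ h₁ h₂ => exact add_mem_lpClosure hW hp h₁ h₂
  | smul c f _ hf => exact smul_mem_lpClosure c hf

end Submodule

lemma mem_lpClosure_of_forall_norm_sub_le [IsFiniteMeasure μ] {S : Set (α → E)} {f : α → E}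
    (hf : AEStronglyMeasurable f μ) (hS : ∀ δ > 0, ∃ g ∈ S, ∀ x, ‖f x - g x‖ ≤ δ) :
    f ∈ lpClosure p μ S := by
  refine ⟨hf, fun ε hε ↦ ?_⟩
  have hfin : μ univ ^ p.toReal⁻¹ ≠ ∞ :=
    ENNReal.rpow_ne_top_of_nonneg (by positivity) (measure_ne_top μ univ)
  obtain ⟨η, hη, hηε⟩ := ENNReal.exists_pos_mul_lt hfin hε.ne'
  obtain ⟨δ, hδ, hδη⟩ : ∃ δ : ℝ, 0 < δ ∧ ENNReal.ofReal δ < η := by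
    obtain ⟨δ, hδ, hδ0, hδη⟩ := ENNReal.lt_iff_exists_real_btwn.mp hη
    exact ⟨δ, ENNReal.ofReal_pos.mp hδ0, hδη⟩
  obtain ⟨g, hgS, hfg⟩ := hS δ hδ
  refine ⟨g, hgS, ?_⟩
  calc eLpNorm (f - g) p μ ≤ μ univ ^ p.toReal⁻¹ * ENNReal.ofReal δ :=
        eLpNorm_le_of_ae_bound (.of_forall hfg)
    _ ≤ η * μ univ ^ p.toReal⁻¹ := by rw [mul_comm]; gcongr
    _ < ε := hηε

end LpClosure

lemma measurable_of_mem_span {α : Type*} [MeasurableSpace α] {S : Set (α → ℝ)}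
    (hS : ∀ g ∈ S, Measurable g) {f : α → ℝ} (hf : f ∈ Submodule.span ℝ S) : Measurable f := by
  induction hf using Submodule.span_induction with
  | mem f hf => exact hS f hf
  | zero => exact measurable_const
  | add _ _ _ _ h₁ h₂ => exact h₁.add h₂
  | smul c _ _ hf => exact hf.const_smul c

def indicatorIciSpan : Submodule ℝ (ℝ → ℝ) :=
  Submodule.span ℝ {g | ∃ K : ℝ, g = (Ici K).indicator fun _ ↦ 1}

lemma measurable_of_mem_indicatorIciSpan {f : ℝ → ℝ} (hf : f ∈ indicatorIciSpan) :
    Measurable f :=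
  measurable_of_mem_span
    (by rintro _ ⟨K, rfl⟩; exact measurable_const.indicator measurableSet_Ici) hf

lemma indicator_Ico_mem_indicatorIciSpan {a b : ℝ} (hab : a ≤ b) :
    (Ico a b).indicator (fun _ ↦ (1 : ℝ)) ∈ indicatorIciSpan := by
  rw [← Ici_sdiff_Ici, indicator_sdiff (Ici_subset_Ici.mpr hab)]
  exact sub_mem (Submodule.subset_span ⟨a, rfl⟩) (Submodule.subset_span ⟨b, rfl⟩)

lemma comp_floor_mem_indicatorIciSpan {g : ℝ → ℝ} (hg : HasCompactSupport g) {t : ℝ}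
    (ht : 0 < t) : (fun x ↦ g (⌊x / t⌋ * t)) ∈ indicatorIciSpan := by
  obtain ⟨R, hR⟩ := hg.isBounded.subset_closedBall 0
  obtain ⟨N, hN⟩ := exists_nat_gt (R / t)
  have hzero : ∀ k : ℤ, k ∉ Finset.Ico (-N : ℤ) N → g (k * t) = 0 := by
    intro k hk
    refine image_eq_zero_of_notMem_tsupport fun hkt ↦ hk ?_
    have hkR := hR hkt
    rw [Metric.mem_closedBall, dist_zero_right, Real.norm_eq_abs, abs_le] at hkR
    rw [div_lt_iff₀ ht] at hN
    have h1 : ((-N : ℤ) : ℝ) < k := by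
      push_cast; nlinarith
    have h2 : (k : ℝ) < (N : ℤ) := by
      push_cast; nlinarith
    exact Finset.mem_Ico.mpr ⟨by exact_mod_cast h1.le, by exact_mod_cast h2⟩
  have hsum : (fun x ↦ g (⌊x / t⌋ * t)) = ∑ k ∈ Finset.Ico (-N : ℤ) N,
      g (k * t) • (Ico (k * t) ((k + 1) * t)).indicator fun _ ↦ (1 : ℝ) := by
    ext x
    have hmem : ∀ k : ℤ, x ∈ Ico (k * t) ((k + 1) * t) ↔ ⌊x / t⌋ = k := by
      intro k
      rw [Int.floor_eq_iff, mem_Ico, le_div_iff₀ ht, div_lt_iff₀ ht]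
    simp only [Finset.sum_apply, Pi.smul_apply, indicator_apply, hmem, smul_eq_mul, mul_ite,
      mul_one, mul_zero, Finset.sum_ite_eq]
    split_ifs with h
    · rfl
    · exact hzero _ h
  rw [hsum]
  exact Submodule.sum_mem _ fun k _ ↦ Submodule.smul_mem _ _ <|
    indicator_Ico_mem_indicatorIciSpan (by nlinarith)

lemma exists_mem_indicatorIciSpan_forall_abs_sub_le {g : ℝ → ℝ} (hg : Continuous g)
    (hg' : HasCompactSupport g) {δ : ℝ} (hδ : 0 < δ) :
    ∃ s ∈ indicatorIciSpan, ∀ x, ‖g x - s x‖ ≤ δ := by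
  obtain ⟨t, ht, hgt⟩ := Metric.uniformContinuous_iff.mp
    (hg'.uniformContinuous_of_continuous hg) δ hδ
  refine ⟨_, comp_floor_mem_indicatorIciSpan hg' ht, fun x ↦ (hgt ?_).le⟩
  have h1 := Int.floor_le (x / t)
  have h2 := Int.lt_floor_add_one (x / t)
  rw [le_div_iff₀ ht] at h1
  rw [div_lt_iff₀ ht] at h2
  rw [Real.dist_eq, abs_lt]
  constructor <;> nlinarith

def callSpan : Submodule ℝ (ℝ → ℝ) :=
  Submodule.span ℝ {g | ∃ K : ℝ, g = fun x ↦ max (x - K) 0}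

lemma measurable_of_mem_callSpan {f : ℝ → ℝ} (hf : f ∈ callSpan) : Measurable f :=
  measurable_of_mem_span (by rintro _ ⟨K, rfl⟩; fun_prop) hf

lemma abs_indicator_Ici_sub_call_spread_le (K : ℝ) {δ : ℝ} (hδ : 0 < δ) (x : ℝ) :
    |(Ici K).indicator (fun _ ↦ 1) x - δ⁻¹ * (max (x - (K - δ)) 0 - max (x - K) 0)| ≤
      (Ico (K - δ) K).indicator (fun _ ↦ 1) x := by
  simp only [indicator_apply, mem_Ici, mem_Ico]
  rcases lt_or_ge x (K - δ) with h | h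
  · rw [max_eq_right (by linarith), max_eq_right (by linarith)]
    simp [show ¬ K ≤ x by linarith, show ¬ K - δ ≤ x by linarith]
  rcases lt_or_ge x K with h' | h'
  · rw [max_eq_left (by linarith), max_eq_right (by linarith), if_neg (by linarith),
      if_pos ⟨h, h'⟩, abs_le]
    have : δ⁻¹ * (x - (K - δ)) ≤ 1 := by
      rw [inv_mul_le_one₀ hδ]; linarith
    constructor <;> nlinarith [inv_pos.mpr hδ]
  · rw [max_eq_left (by linarith), max_eq_left (by linarith), if_pos h',
      if_neg (by push Not; intro; linarith)]
    field_simp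
    simp

lemma tendsto_measure_Ico_nhdsGT {μ : Measure ℝ} [IsFiniteMeasure μ] (K : ℝ) :
    Tendsto (fun δ ↦ μ (Ico (K - δ) K)) (𝓝[>] 0) (𝓝 0) := by
  have h := tendsto_measure_biInter_gt (μ := μ) (s := fun δ ↦ Ico (K - δ) K) (a := 0)
    (fun _ _ ↦ measurableSet_Ico.nullMeasurableSet)
    (fun _ _ _ hij ↦ Ico_subset_Ico (by linarith) le_rfl) ⟨1, one_pos, measure_ne_top μ _⟩
  have hempty : ⋂ δ > (0 : ℝ), Ico (K - δ) K = ∅ := by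
    refine eq_empty_iff_forall_notMem.mpr fun x hx ↦ ?_
    simp only [mem_iInter, mem_Ico] at hx
    have hxK := (hx 1 one_pos).2
    linarith [(hx ((K - x) / 2) (by linarith)).1]
  rwa [hempty, measure_empty] at h

lemma indicator_Ici_mem_lpClosure_callSpan {p : ℝ≥0∞} (hp₀ : p ≠ 0) (hp : p ≠ ∞)
    {μ : Measure ℝ} [IsFiniteMeasure μ] (K : ℝ) :
    (Ici K).indicator (fun _ ↦ (1 : ℝ)) ∈ lpClosure p μ callSpan := by
  refine ⟨(measurable_const.indicator measurableSet_Ici).aestronglyMeasurable, fun ε hε ↦ ?_⟩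
  have hlim : Tendsto (fun δ ↦ μ (Ico (K - δ) K) ^ (1 / p.toReal)) (𝓝[>] 0) (𝓝 0) := by
    have h := ((ENNReal.continuous_rpow_const (y := 1 / p.toReal)).tendsto 0).comp
      (tendsto_measure_Ico_nhdsGT (μ := μ) K)
    rwa [Function.comp_def, ENNReal.zero_rpow_of_pos (by simp [ENNReal.toReal_pos hp₀ hp])] at h
  obtain ⟨δ, hδε, hδ⟩ :=
    ((hlim.eventually (gt_mem_nhds hε)).and self_mem_nhdsWithin).exists
  refine ⟨δ⁻¹ • ((fun x ↦ max (x - (K - δ)) 0) - fun x ↦ max (x - K) 0),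
    Submodule.smul_mem _ _ (sub_mem (Submodule.subset_span ⟨K - δ, rfl⟩)
      (Submodule.subset_span ⟨K, rfl⟩)), ?_⟩
  calc eLpNorm ((Ici K).indicator (fun _ ↦ (1 : ℝ)) -
        δ⁻¹ • ((fun x ↦ max (x - (K - δ)) 0) - fun x ↦ max (x - K) 0)) p μ
      ≤ eLpNorm ((Ico (K - δ) K).indicator (fun _ ↦ (1 : ℝ))) p μ := by
        refine eLpNorm_mono fun x ↦ ?_
        simpa [Real.norm_eq_abs, abs_of_nonneg (indicator_nonneg (fun _ _ ↦ zero_le_one) x)]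
          using abs_indicator_Ici_sub_call_spread_le K (mem_Ioi.mp hδ) x
    _ = μ (Ico (K - δ) K) ^ (1 / p.toReal) := by
        simp [eLpNorm_indicator_const measurableSet_Ico hp₀ hp]
    _ < ε := hδε

lemma mem_lpClosure_indicatorIciSpan {p : ℝ≥0∞} (hp : 1 ≤ p) (hp' : p ≠ ∞) {μ : Measure ℝ}
    [IsFiniteMeasure μ] {f : ℝ → ℝ} (hf : MemLp f p μ) : f ∈ lpClosure p μ indicatorIciSpan := by
  have hCc : {g | Continuous g ∧ HasCompactSupport g} ⊆ lpClosure p μ indicatorIciSpan :=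
    fun g ⟨hg, hg'⟩ ↦ mem_lpClosure_of_forall_norm_sub_le hg.aestronglyMeasurable
      fun _ hδ ↦ exists_mem_indicatorIciSpan_forall_abs_sub_le hg hg' hδ
  refine lpClosure_subset_of_subset_lpClosure hp
    (fun g hg ↦ (measurable_of_mem_indicatorIciSpan hg).aestronglyMeasurable) hCc
    ⟨hf.1, fun ε hε ↦ ?_⟩
  obtain ⟨η, hη, hηε⟩ := exists_between hε
  obtain ⟨g, hg', hfg, hg, -⟩ := hf.exists_hasCompactSupport_eLpNorm_sub_le hp' hη.ne'
  exact ⟨g, ⟨hg, hg'⟩, hfg.trans_lt hηε⟩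

lemma indicatorIciSpan_subset_lpClosure_callSpan {p : ℝ≥0∞} (hp : 1 ≤ p) (hp' : p ≠ ∞)
    {μ : Measure ℝ} [IsFiniteMeasure μ] :
    (indicatorIciSpan : Set (ℝ → ℝ)) ⊆ lpClosure p μ callSpan :=
  span_subset_lpClosure (fun _ hg ↦ (measurable_of_mem_callSpan hg).aestronglyMeasurable) hp
    (by rintro _ ⟨K, rfl⟩
        exact indicator_Ici_mem_lpClosure_callSpan (zero_lt_one.trans_le hp).ne' hp' K)

theorem stmt19 (p : ℝ) (hp : 1 ≤ p) (μ : Measure ℝ) [IsFiniteMeasure μ] :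
    (∀ f : ℝ → ℝ, MemLp f (ENNReal.ofReal p) μ → ∀ ε : ℝ≥0∞, 0 < ε →
      ∃ g ∈ Submodule.span ℝ
          {g : ℝ → ℝ | ∃ K : ℝ, g = Set.indicator (Set.Ici K) fun _ => (1 : ℝ)},
        eLpNorm (f - g) (ENNReal.ofReal p) μ < ε) ∧
    ((∫⁻ y, ENNReal.ofReal (|y| ^ p) ∂μ) < ⊤ →
      ∀ f : ℝ → ℝ, MemLp f (ENNReal.ofReal p) μ → ∀ ε : ℝ≥0∞, 0 < ε →
        ∃ g ∈ Submodule.span ℝ {g : ℝ → ℝ | ∃ K : ℝ, g = fun x => max (x - K) 0},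
          eLpNorm (f - g) (ENNReal.ofReal p) μ < ε) := by
  have hp₁ : 1 ≤ ENNReal.ofReal p := ENNReal.one_le_ofReal.mpr hp
  have hdense : ∀ f, MemLp f (ENNReal.ofReal p) μ → f ∈ lpClosure _ μ indicatorIciSpan :=
    fun f hf ↦ mem_lpClosure_indicatorIciSpan hp₁ ENNReal.ofReal_ne_top hf
  refine ⟨fun f hf ε hε ↦ (hdense f hf).2 ε hε, fun _ f hf ε hε ↦ ?_⟩
  refine (lpClosure_subset_of_subset_lpClosure hp₁
    (fun _ hg ↦ (measurable_of_mem_callSpan hg).aestronglyMeasurable)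
    (indicatorIciSpan_subset_lpClosure_callSpan hp₁ ENNReal.ofReal_ne_top) (hdense f hf)).2 ε hε
end
end
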